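/- arXiv:1112.5090 — 3 statements merged into one kernel-verified Lean document; each statement's English description precedes it below -/
import Mathlib

section
/- For every positive integer t, S(1,t,1) = E(t); that is, ∑_{n=1}^{∞} μ(n)/(nt·φ(nt)) = (A/t²)·∏_{p|t} (p²−1)/(p²−p−1), where the finite product is over primes p dividing t. -/
open Polynomial

/-- The Wagstaff sum `S(h,t,m) = ∑_{n ≥ 1, m ∣ nt} μ(n)·gcd(nt,h)/(nt·φ(nt))`. -/
noncomputable def wagstaffS (h t m : ℕ) : ℝ :=
  ∑' n : ℕ, if 0 < n ∧ m ∣ n * t then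
      (ArithmeticFunction.moebius n : ℝ) * (Nat.gcd (n * t) h : ℝ) /
        (↑(n * t) * ↑(Nat.totient (n * t)))
    else 0

/-- The Artin constant `A = ∏_p (1 - 1/(p(p-1)))`. -/
noncomputable def artinConst : ℝ :=
  ∏' p : Nat.Primes, (1 - 1 / ((p : ℝ) * ((p : ℝ) - 1)))

/-- `E_1(m_2)`, depending also on the 2-parts `h_2` and `t_2`. -/
noncomputable def E1 (h2 t2 m2 : ℕ) : ℝ :=
  if m2 ∣ t2 then 1
  else if m2 = 2 * t2 ∧ Nat.lcm 2 h2 ∣ t2 then -1/3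
  else if m2 = 2 * t2 ∧ ¬ Nat.lcm 2 h2 ∣ t2 then -1
  else 0

/-- `E_2(m_2)`, depending also on the 2-part `t_2`. -/
noncomputable def E2 (t2 m2 : ℕ) : ℝ :=
  if m2 ∣ t2 then 1
  else if m2 = 2 * t2 ∧ m2 ≠ 2 then -1/3
  else if m2 = 2 * t2 ∧ m2 = 2 then -1
  else 0

/-- `[F_p : ℚ]`, where `F_p = ℚ(ζ_p, g^{1/p})` is the splitting field of `X^p - g` over `ℚ`. -/
noncomputable def FpDeg (g : ℚ) (p : ℕ) : ℕ :=
  Module.finrank ℚ ((X ^ p - C g : ℚ[X]).SplittingField)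

/-- `A(g,t) = (gcd(t,h)/t²)·∏_{p∣t, h_p∣t_p}(1+1/p)·∏_{p∤t}(1-1/[F_p:ℚ])`. -/
noncomputable def Agt (g : ℚ) (h t : ℕ) : ℝ :=
  ((Nat.gcd t h : ℝ) / (t : ℝ) ^ 2) *
    (∏ p ∈ t.primeFactors, if ordProj[p] h ∣ ordProj[p] t then 1 + 1 / (p : ℝ) else 1) *
    ∏' p : Nat.Primes, (if (p : ℕ) ∣ t then 1 else 1 - 1 / (FpDeg g (p : ℕ) : ℝ))

/-- `Π_1 = ∏_{p ∣ d, p ∤ 2t} (-1/([F_p:ℚ]-1))`, where `d` is (the absolute value of) `d(g₀)`. -/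
noncomputable def Pi1 (g : ℚ) (t d : ℕ) : ℝ :=
  ∏ p ∈ d.primeFactors, (if ¬ p ∣ 2 * t then -1 / ((FpDeg g p : ℝ) - 1) else 1)

/-- Discriminant of `ℚ(√d)` for a squarefree integer `d`: `d` if `d ≡ 1 (mod 4)`, else `4d`. -/
def sqDisc (d : ℤ) : ℤ := if d % 4 = 1 then d else 4 * d

/-- `g₀` is not an exact power of a rational number. -/
def NotExactPower (g0 : ℚ) : Prop := ∀ (r : ℚ) (k : ℕ), 2 ≤ k → g0 ≠ r ^ k


open ArithmeticFunction in
/-- The multiplicative function `n ↦ μ(n)·φ(gcd(n,t)) / (n·φ(n)·gcd(n,t))`. -/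
noncomputable def wagF (t : ℕ) : ℕ → ℝ := fun n =>
  (moebius n : ℝ) * (Nat.totient (Nat.gcd n t) : ℝ) /
    ((n : ℝ) * (Nat.totient n : ℝ) * (Nat.gcd n t : ℝ))

lemma wagF_zero (t : ℕ) : wagF t 0 = 0 := by simp [wagF]

lemma wagF_one (t : ℕ) : wagF t 1 = 1 := by simp [wagF]

lemma wagF_mul (t : ℕ) {m n : ℕ} (h : Nat.Coprime m n) :
    wagF t (m * n) = wagF t m * wagF t n := by
  have hg : Nat.gcd (m * n) t = Nat.gcd m t * Nat.gcd n t := by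
    rw [Nat.gcd_comm (m * n) t, Nat.Coprime.gcd_mul t h, Nat.gcd_comm t m, Nat.gcd_comm t n]
  have hgcop : Nat.Coprime (Nat.gcd m t) (Nat.gcd n t) :=
    Nat.Coprime.coprime_dvd_right (Nat.gcd_dvd_left n t)
      (Nat.Coprime.coprime_dvd_left (Nat.gcd_dvd_left m t) h)
  have hμ : (ArithmeticFunction.moebius (m * n) : ℤ) =
      ArithmeticFunction.moebius m * ArithmeticFunction.moebius n :=
    ArithmeticFunction.isMultiplicative_moebius.map_mul_of_coprime h
  unfold wagF
  rw [hg, Nat.totient_mul h, Nat.totient_mul hgcop, hμ]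
  push_cast
  ring

lemma odd_le_totient_sq : ∀ n : ℕ, Odd n → n ≤ n.totient ^ 2 := by
  intro n
  induction n using Nat.recOnPosPrimePosCoprime with
  | prime_pow p k hp hk =>
    intro hodd
    have hp3 : 3 ≤ p := by
      rcases hp.eq_two_or_odd' with h | h
      · subst h
        exact absurd ((Nat.even_pow).mpr ⟨even_two, hk.ne'⟩) (Nat.not_even_iff_odd.mpr hodd)
      · have := hp.two_le
        rcases Nat.lt_or_ge p 3 with h3 | h3
        · interval_cases p
          · exact absurd h (by decide)
        · exact h3
    obtain ⟨j, rfl⟩ : ∃ j, k = j + 1 := ⟨k - 1, by omega⟩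
    obtain ⟨q, rfl⟩ : ∃ q, p = q + 3 := ⟨p - 3, by omega⟩
    rw [Nat.totient_prime_pow hp (Nat.succ_pos j)]
    have h1 : (q + 3) ^ (j + 1) ≤ (q + 3) ^ (2 * j + 1) :=
      Nat.pow_le_pow_right (by omega) (by omega)
    refine h1.trans ?_
    have h2 : q + 3 - 1 = q + 2 := by omega
    rw [h2]
    calc (q + 3) ^ (2 * j + 1) = (q + 3) ^ (2 * j) * (q + 3) := pow_succ _ _
      _ ≤ (q + 3) ^ (2 * j) * (q + 2) ^ 2 := Nat.mul_le_mul_left _ (by nlinarith)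
      _ = ((q + 3) ^ j * (q + 2)) ^ 2 := by ring
  | zero => intro h; simp at h
  | one => intro _; simp
  | coprime a b ha hb hab iha ihb =>
    intro hodd
    rw [Nat.odd_mul] at hodd
    rw [Nat.totient_mul hab, mul_pow]
    exact Nat.mul_le_mul (iha hodd.1) (ihb hodd.2)

lemma le_two_mul_totient_sq (n : ℕ) : n ≤ 2 * n.totient ^ 2 := by
  rcases Nat.eq_zero_or_pos n with rfl | hn
  · simp
  have hm0 : ¬ 2 ∣ ordCompl[2] n := Nat.not_dvd_ordCompl Nat.prime_two hn.ne'
  have hmodd : Odd (ordCompl[2] n) := Nat.odd_iff.mpr (Nat.two_dvd_ne_zero.mp hm0)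
  have hcop : Nat.Coprime (2 ^ n.factorization 2) (ordCompl[2] n) :=
    Nat.Coprime.pow_left _ (Nat.coprime_ordCompl Nat.prime_two hn.ne')
  have hdecomp : 2 ^ n.factorization 2 * ordCompl[2] n = n :=
    Nat.ordProj_mul_ordCompl_eq_self n 2
  have h2a : ∀ a : ℕ, 2 ^ a ≤ 2 * Nat.totient (2 ^ a) ^ 2 := by
    intro a
    rcases a with _ | j
    · simp
    · have e : Nat.totient (2 ^ (j + 1)) = 2 ^ j := by
        rw [Nat.totient_prime_pow Nat.prime_two (Nat.succ_pos j)]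
        simp
      rw [e, ← pow_mul, ← pow_succ']
      exact Nat.pow_le_pow_right (by norm_num) (by omega)
  calc n = 2 ^ n.factorization 2 * ordCompl[2] n := hdecomp.symm
    _ ≤ (2 * Nat.totient (2 ^ n.factorization 2) ^ 2) * (Nat.totient (ordCompl[2] n) ^ 2) :=
        Nat.mul_le_mul (h2a _) (odd_le_totient_sq _ hmodd)
    _ = 2 * (Nat.totient (2 ^ n.factorization 2) * Nat.totient (ordCompl[2] n)) ^ 2 := by ring
    _ = 2 * n.totient ^ 2 := by rw [← Nat.totient_mul hcop, hdecomp]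

open ArithmeticFunction in
lemma wagF_norm_le (t : ℕ) (n : ℕ) :
    ‖wagF t n‖ ≤ Real.sqrt 2 * (((n : ℝ) ^ ((3 : ℝ) / 2)))⁻¹ := by
  rcases Nat.eq_zero_or_pos n with rfl | hn
  · simp [wagF_zero, Real.zero_rpow (by norm_num : ((3:ℝ)/2) ≠ 0)]
  have hφ : 0 < n.totient := Nat.totient_pos.mpr hn
  have hg : 0 < Nat.gcd n t := Nat.gcd_pos_of_pos_left t hn
  have hnR : (0:ℝ) < n := by exact_mod_cast hn
  have hφR : (0:ℝ) < n.totient := by exact_mod_cast hφ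
  have hgR : (0:ℝ) < Nat.gcd n t := by exact_mod_cast hg
  have hμ : |(moebius n : ℝ)| ≤ 1 := by
    by_cases hsq : Squarefree n
    · rw [moebius_apply_of_squarefree hsq]
      push_cast
      rw [abs_pow, abs_neg, abs_one, one_pow]
    · rw [moebius_eq_zero_of_not_squarefree hsq]
      norm_num
  have step1 : ‖wagF t n‖ ≤ 1 / ((n : ℝ) * n.totient) := by
    unfold wagF
    rw [Real.norm_eq_abs, abs_div, abs_mul]
    have hden : |(n : ℝ) * ↑n.totient * ↑(Nat.gcd n t)| = (n : ℝ) * ↑n.totient * ↑(Nat.gcd n t) := by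
      rw [abs_of_pos]; positivity
    rw [hden]
    have hnum : |(moebius n : ℝ)| * |((Nat.gcd n t).totient : ℝ)| ≤ 1 * (Nat.gcd n t : ℝ) := by
      apply mul_le_mul hμ _ (abs_nonneg _) zero_le_one
      rw [abs_of_nonneg (by positivity)]
      exact_mod_cast Nat.totient_le _
    calc |(moebius n : ℝ)| * |((Nat.gcd n t).totient : ℝ)| / ((n:ℝ) * ↑n.totient * ↑(Nat.gcd n t))
        ≤ 1 * (Nat.gcd n t : ℝ) / ((n:ℝ) * ↑n.totient * ↑(Nat.gcd n t)) := by
          apply div_le_div_of_nonneg_right ?_ (by positivity)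
          · exact hnum
      _ = 1 / ((n : ℝ) * n.totient) := by
          field_simp
  refine step1.trans ?_
  have hb : (n : ℝ) ≤ 2 * (n.totient : ℝ) ^ 2 := by exact_mod_cast le_two_mul_totient_sq n
  have h3 : Real.sqrt (((n:ℝ)) ^ 3) = ((n:ℝ)) ^ ((3 : ℝ) / 2) := by
    rw [Real.sqrt_eq_rpow, ← Real.rpow_natCast (n:ℝ) 3, ← Real.rpow_mul (Nat.cast_nonneg n)]
    norm_num
  have h4 : Real.sqrt ((n:ℝ) ^ 3) ≤ Real.sqrt 2 * ((n:ℝ) * n.totient) := by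
    have h5 : Real.sqrt 2 * ((n:ℝ) * n.totient) = Real.sqrt (2 * ((n:ℝ) * n.totient) ^ 2) := by
      rw [Real.sqrt_mul (by norm_num), Real.sqrt_sq (by positivity)]
    rw [h5]
    apply Real.sqrt_le_sqrt
    nlinarith [mul_le_mul_of_nonneg_left hb (sq_nonneg (n:ℝ))]
  rw [← h3]
  have hpos2 : 0 < Real.sqrt ((n:ℝ) ^ 3) := Real.sqrt_pos.mpr (by positivity)
  rw [← div_eq_mul_inv, div_le_div_iff₀ (by positivity) hpos2, one_mul]
  exact h4

lemma summable_wagF_norm (t : ℕ) : Summable (fun n => ‖wagF t n‖) :=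
  Summable.of_nonneg_of_le (fun _ => norm_nonneg _) (wagF_norm_le t)
    ((Real.summable_nat_rpow_inv.mpr (by norm_num)).mul_left _)

open ArithmeticFunction in
lemma wagF_tsum_pow (t : ℕ) {p : ℕ} (hp : p.Prime) :
    ∑' e : ℕ, wagF t (p ^ e) = 1 + wagF t p := by
  rw [tsum_eq_sum (s := {0, 1}) ?h]
  · rw [Finset.sum_pair (by norm_num : (0:ℕ) ≠ 1), pow_zero, pow_one, wagF_one]
  · intro e he
    simp only [Finset.mem_insert, Finset.mem_singleton, not_or] at he
    have hμ : moebius (p ^ e) = 0 := by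
      rw [moebius_apply_prime_pow hp he.1, if_neg he.2]
    unfold wagF
    rw [hμ]
    simp

open ArithmeticFunction in
theorem wagstaff_aux (t : ℕ) (ht : 0 < t) :
    (∑' n : ℕ, if 0 < n ∧ 1 ∣ n * t then
      (ArithmeticFunction.moebius n : ℝ) * (Nat.gcd (n * t) 1 : ℝ) /
        (↑(n * t) * ↑(Nat.totient (n * t)))
    else 0) = (∏' p : Nat.Primes, (1 - 1 / ((p : ℝ) * ((p : ℝ) - 1)))) / (t : ℝ) ^ 2 *
      ∏ p ∈ t.primeFactors, (((p : ℝ) ^ 2 - 1) / ((p : ℝ) ^ 2 - p - 1)) := by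
  set a : Nat.Primes → ℝ := fun p => 1 - 1 / ((p : ℝ) * ((p : ℝ) - 1)) with ha_def
  set c : Nat.Primes → ℝ := fun p =>
    if (p : ℕ) ∣ t then (1 - 1 / (p : ℝ) ^ 2) / (1 - 1 / ((p : ℝ) * ((p : ℝ) - 1))) else 1
    with hc_def
  have hPfacts : ∀ p : ℕ, p.Prime → (2:ℝ) ≤ (p:ℝ) ∧ (1 - 1 / ((p : ℝ) * ((p : ℝ) - 1))) ≠ 0 := by
    intro p hp
    have h2 : (2:ℝ) ≤ (p:ℝ) := by exact_mod_cast hp.two_le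
    refine ⟨h2, ?_⟩
    have hlt : 1 / ((p : ℝ) * ((p : ℝ) - 1)) < 1 := by
      rw [div_lt_one (by nlinarith)]
      nlinarith
    intro h
    have h' : 1 - 1 / ((p : ℝ) * ((p : ℝ) - 1)) > 0 := by linarith
    rw [h] at h'
    exact lt_irrefl 0 h'
  -- per-prime Euler factor
  have hfactor : ∀ (t' : ℕ) (p : Nat.Primes),
      ∑' e : ℕ, wagF t' ((p : ℕ) ^ e) =
        a p * (if (p : ℕ) ∣ t' then
          (1 - 1 / (p : ℝ) ^ 2) / (1 - 1 / ((p : ℝ) * ((p : ℝ) - 1))) else 1) := by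
    intro t' p
    obtain ⟨h2, hane⟩ := hPfacts (p : ℕ) p.2
    have hp0 : ((p:ℕ) : ℝ) ≠ 0 := by linarith
    have hp1 : ((p:ℕ) : ℝ) - 1 ≠ 0 := by intro h; nlinarith [sub_eq_zero.mp h]
    have hφp : Nat.totient (p:ℕ) = (p:ℕ) - 1 := Nat.totient_prime p.2
    have hμp : moebius (p:ℕ) = -1 := moebius_apply_prime p.2
    have hcast : (((p:ℕ) - 1 : ℕ) : ℝ) = ((p:ℕ):ℝ) - 1 := by
      rw [Nat.cast_sub p.2.one_le, Nat.cast_one]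
    rw [wagF_tsum_pow t' p.2]
    simp only [ha_def]
    by_cases hdvd : (p : ℕ) ∣ t'
    · rw [if_pos hdvd, mul_comm, div_mul_cancel₀ _ hane]
      have hgcd : Nat.gcd (p:ℕ) t' = (p:ℕ) := Nat.gcd_eq_left hdvd
      unfold wagF
      rw [hgcd, hφp, hμp, hcast]
      push_cast
      field_simp
      ring
    · rw [if_neg hdvd, mul_one]
      have hgcd : Nat.gcd (p:ℕ) t' = 1 := (Nat.Prime.coprime_iff_not_dvd p.2).mpr hdvd
      unfold wagF
      rw [hgcd, hφp, hμp, hcast]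
      push_cast
      field_simp
      simp only [Nat.totient_one, Nat.cast_one]
      ring
  -- Euler product for t = 1 gives multipliability of the Artin factors
  have HP1 : HasProd (fun p : Nat.Primes => ∑' e : ℕ, wagF 1 ((p:ℕ) ^ e)) (∑' n, wagF 1 n) :=
    EulerProduct.eulerProduct_hasProd (wagF_one 1) (fun {m n} h => wagF_mul 1 h)
      (summable_wagF_norm 1) (wagF_zero 1)
  have E1fun : (fun p : Nat.Primes => ∑' e : ℕ, wagF 1 ((p:ℕ) ^ e)) = a := by
    funext p
    rw [hfactor 1 p, if_neg (fun h => p.2.one_lt.ne' (Nat.dvd_one.mp h)), mul_one]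
  rw [E1fun] at HP1
  have ha_mult : Multipliable a := HP1.multipliable
  -- Euler product for t
  have HP : HasProd (fun p : Nat.Primes => ∑' e : ℕ, wagF t ((p:ℕ) ^ e)) (∑' n, wagF t n) :=
    EulerProduct.eulerProduct_hasProd (wagF_one t) (fun {m n} h => wagF_mul t h)
      (summable_wagF_norm t) (wagF_zero t)
  have Efun : (fun p : Nat.Primes => ∑' e : ℕ, wagF t ((p:ℕ) ^ e)) = fun p => a p * c p := by
    funext p
    rw [hfactor t p, hc_def]
  rw [Efun] at HP
  -- the finite set of primes dividing t, as a Finset of Nat.Primes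
  set s : Finset Nat.Primes := t.primeFactors.attach.map
    ⟨fun x : {q : ℕ // q ∈ t.primeFactors} =>
        (⟨x.1, Nat.prime_of_mem_primeFactors x.2⟩ : Nat.Primes),
      fun x y hxy => Subtype.ext (congrArg (fun z : Nat.Primes => z.1) hxy)⟩ with hs_def
  have hc_supp : ∀ p ∉ s, c p = 1 := by
    intro p hp
    have hnd : ¬ (p : ℕ) ∣ t := by
      intro hdvd
      apply hp
      rw [hs_def]
      refine Finset.mem_map.mpr ⟨⟨(p:ℕ), ?_⟩, Finset.mem_attach _ _, ?_⟩
      · exact Nat.mem_primeFactors.mpr ⟨p.2, hdvd, ht.ne'⟩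
      · exact Subtype.ext rfl
    rw [hc_def]
    exact if_neg hnd
  have HPc : HasProd c (∏ p ∈ s, c p) := hasProd_prod_of_ne_finset_one hc_supp
  have htsum : ∑' n, wagF t n = (∏' p, a p) * ∏ p ∈ s, c p := by
    rw [← HP.tprod_eq, Multipliable.tprod_mul ha_mult HPc.multipliable, HPc.tprod_eq]
  -- rewrite the finite product over s as a product over primeFactors
  have hs_prod : ∏ p ∈ s, c p =
      ∏ q ∈ t.primeFactors, ((1 - 1 / (q : ℝ) ^ 2) / (1 - 1 / ((q : ℝ) * ((q : ℝ) - 1)))) := by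
    rw [hs_def, Finset.prod_map]
    calc ∏ x ∈ t.primeFactors.attach,
          c ⟨x.1, Nat.prime_of_mem_primeFactors x.2⟩
        = ∏ x ∈ t.primeFactors.attach,
            ((1 - 1 / (x.1 : ℝ) ^ 2) / (1 - 1 / ((x.1 : ℝ) * ((x.1 : ℝ) - 1)))) := by
          refine Finset.prod_congr rfl fun x _ => ?_
          rw [hc_def]
          exact if_pos (Nat.dvd_of_mem_primeFactors x.2)
      _ = ∏ q ∈ t.primeFactors, ((1 - 1 / (q : ℝ) ^ 2) / (1 - 1 / ((q : ℝ) * ((q : ℝ) - 1)))) :=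
          Finset.prod_attach t.primeFactors
            (fun q => (1 - 1 / (q : ℝ) ^ 2) / (1 - 1 / ((q : ℝ) * ((q : ℝ) - 1))))
  -- termwise rewriting of the Wagstaff sum
  have hφt : 0 < t.totient := Nat.totient_pos.mpr ht
  have htR : ((t:ℕ) : ℝ) ≠ 0 := by positivity
  have hφtR : ((t.totient : ℕ) : ℝ) ≠ 0 := by positivity
  have hterm : ∀ n : ℕ, (if 0 < n ∧ 1 ∣ n * t then
      (moebius n : ℝ) * (Nat.gcd (n * t) 1 : ℝ) / (↑(n * t) * ↑(Nat.totient (n * t)))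
      else 0) = 1 / ((t:ℝ) * (t.totient : ℝ)) * wagF t n := by
    intro n
    rcases Nat.eq_zero_or_pos n with rfl | hn
    · simp [wagF_zero]
    · rw [if_pos ⟨hn, one_dvd _⟩, Nat.gcd_one_right]
      have key : ((Nat.gcd n t).totient : ℝ) * (((n*t).totient : ℝ)) =
          (n.totient : ℝ) * (t.totient : ℝ) * (Nat.gcd n t : ℝ) := by
        exact_mod_cast Nat.totient_gcd_mul_totient_mul n t
      have hnt : 0 < n * t := Nat.mul_pos hn ht
      have h1 : ((n * t : ℕ) : ℝ) ≠ 0 := by positivity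
      have h2 : (((n*t).totient : ℕ) : ℝ) ≠ 0 := by
        have := Nat.totient_pos.mpr hnt; positivity
      have h3 : ((n:ℕ) : ℝ) ≠ 0 := by positivity
      have h4 : ((n.totient : ℕ) : ℝ) ≠ 0 := by
        have := Nat.totient_pos.mpr hn; positivity
      have h5 : ((Nat.gcd n t : ℕ) : ℝ) ≠ 0 := by
        have := Nat.gcd_pos_of_pos_left t hn; positivity
      unfold wagF
      push_cast at key ⊢
      field_simp
      linear_combination (-(moebius n : ℝ)) * key
  rw [tsum_congr hterm, tsum_mul_left, htsum, hs_prod]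
  -- final algebraic manipulation
  have hΦcast : ((∏ q ∈ t.primeFactors, (q - 1) : ℕ) : ℝ) =
      ∏ q ∈ t.primeFactors, ((q:ℝ) - 1) := by
    rw [Nat.cast_prod]
    exact Finset.prod_congr rfl fun q hq => by
      rw [Nat.cast_sub (Nat.prime_of_mem_primeFactors hq).one_le, Nat.cast_one]
  have hΦt2 : (t.totient : ℝ) * ∏ q ∈ t.primeFactors, (q:ℝ) =
      (t:ℝ) * ∏ q ∈ t.primeFactors, ((q:ℝ) - 1) := by
    have hnat := Nat.totient_mul_prod_primeFactors t
    have := congrArg (fun k : ℕ => (k : ℝ)) hnat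
    push_cast at this
    rw [← hΦcast]
    push_cast
    exact this
  have e1 : ∏ q ∈ t.primeFactors,
        (((1 - 1 / (q : ℝ) ^ 2) / (1 - 1 / ((q : ℝ) * ((q : ℝ) - 1)))) * (q:ℝ)) =
      ∏ q ∈ t.primeFactors,
        ((((q : ℝ) ^ 2 - 1) / ((q : ℝ) ^ 2 - q - 1)) * ((q:ℝ) - 1)) := by
    refine Finset.prod_congr rfl fun q hq => ?_
    have hq' := Nat.prime_of_mem_primeFactors hq
    obtain ⟨h2, hane⟩ := hPfacts q hq'
    have hq0 : ((q:ℕ) : ℝ) ≠ 0 := by linarith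
    have hq1 : ((q:ℕ) : ℝ) - 1 ≠ 0 := by intro h; nlinarith [sub_eq_zero.mp h]
    have hq3 : ((q:ℝ)) ^ 2 - q - 1 ≠ 0 := by nlinarith
    have hA : (1 - 1 / (q : ℝ) ^ 2) = ((q:ℝ) ^ 2 - 1) / (q:ℝ) ^ 2 := by
      field_simp
    have hB : (1 - 1 / ((q : ℝ) * ((q : ℝ) - 1))) =
        ((q:ℝ) ^ 2 - q - 1) / ((q:ℝ) * ((q:ℝ) - 1)) := by
      field_simp
    rw [hA, hB]
    field_simp
  rw [Finset.prod_mul_distrib, Finset.prod_mul_distrib] at e1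
  have hQ : ∏ q ∈ t.primeFactors, (q:ℝ) ≠ 0 :=
    Finset.prod_ne_zero_iff.mpr fun q hq => by
      have := (Nat.prime_of_mem_primeFactors hq).pos; positivity
  have key3 : (∏ q ∈ t.primeFactors, ((1 - 1 / (q : ℝ) ^ 2) /
        (1 - 1 / ((q : ℝ) * ((q : ℝ) - 1))))) * (t:ℝ) ^ 2 =
      (∏ q ∈ t.primeFactors, (((q : ℝ) ^ 2 - 1) / ((q : ℝ) ^ 2 - q - 1))) *
        ((t:ℝ) * (t.totient : ℝ)) := by
    apply mul_right_cancel₀ hQ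
    linear_combination ((t:ℝ)^2) * e1 -
      ((∏ q ∈ t.primeFactors, (((q : ℝ) ^ 2 - 1) / ((q : ℝ) ^ 2 - q - 1))) * (t:ℝ)) * hΦt2
  have hWR : (∏ q ∈ t.primeFactors, ((1 - 1 / (q : ℝ) ^ 2) /
        (1 - 1 / ((q : ℝ) * ((q : ℝ) - 1))))) / ((t:ℝ) * (t.totient : ℝ)) =
      (∏ q ∈ t.primeFactors, (((q : ℝ) ^ 2 - 1) / ((q : ℝ) ^ 2 - q - 1))) / (t:ℝ) ^ 2 := by
    rw [div_eq_div_iff (mul_ne_zero htR hφtR) (pow_ne_zero 2 htR)]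
    linear_combination key3
  calc 1 / ((t:ℝ) * (t.totient : ℝ)) * ((∏' p, a p) * ∏ q ∈ t.primeFactors,
        ((1 - 1 / (q : ℝ) ^ 2) / (1 - 1 / ((q : ℝ) * ((q : ℝ) - 1)))))
      = (∏' p, a p) * ((∏ q ∈ t.primeFactors, ((1 - 1 / (q : ℝ) ^ 2) /
          (1 - 1 / ((q : ℝ) * ((q : ℝ) - 1))))) / ((t:ℝ) * (t.totient : ℝ))) := by ring
    _ = (∏' p, a p) * ((∏ q ∈ t.primeFactors, (((q : ℝ) ^ 2 - 1) /
          ((q : ℝ) ^ 2 - q - 1))) / (t:ℝ) ^ 2) := by rw [hWR]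
    _ = (∏' p, a p) / (t : ℝ) ^ 2 * ∏ q ∈ t.primeFactors,
          (((q : ℝ) ^ 2 - 1) / ((q : ℝ) ^ 2 - q - 1)) := by ring

/-- `S(1,t,1) = E(t) = (A/t²)·∏_{p ∣ t} (p²-1)/(p²-p-1)`. -/
theorem wagstaff_one_t_one (t : ℕ) (ht : 0 < t) :
    wagstaffS 1 t 1 = artinConst / (t : ℝ) ^ 2 *
      ∏ p ∈ t.primeFactors, (((p : ℝ) ^ 2 - 1) / ((p : ℝ) ^ 2 - p - 1)) := by
  have h := wagstaff_aux t ht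
  unfold wagstaffS artinConst
  exact h
end

section
/- If h is an even positive integer and t is an odd positive integer, then S(h,t,2) = −(gcd(t,h)/t²) · ∏_{p|t, h_p|t_p} (1 + 1/p) · ∏_{p∤2t} (1 − gcd(p,h)/(p(p−1))), where the first product is over primes p dividing t whose p-part of h divides the p-part of t, and the second (infinite) product is over all primes p not dividing 2t. -/
open Polynomial

namespace WagstaffAux
open ArithmeticFunction


lemma eq_of_fact {x y : ℕ} (hx : x ≠ 0) (hy : y ≠ 0)
    (hxy : ∀ p, x.factorization p = y.factorization p) : x = y :=
  Nat.factorization_inj hx hy (Finsupp.ext hxy)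

lemma fact_or {m n : ℕ} (hmn : Nat.Coprime m n) (p : ℕ) :
    m.factorization p = 0 ∨ n.factorization p = 0 := by
  by_contra hc
  push_neg at hc
  have h1 : p ∣ m := Nat.dvd_of_factorization_pos hc.1
  have h2 : p ∣ n := Nat.dvd_of_factorization_pos hc.2
  have hp1 : p ∣ 1 := hmn ▸ Nat.dvd_gcd h1 h2
  have : p = 1 := Nat.dvd_one.mp hp1
  subst this
  simpa [Nat.factorization_eq_zero_of_not_prime m Nat.not_prime_one] using hc.1

lemma gcdA {a h m n : ℕ} (ha : a ≠ 0) (hh : h ≠ 0) (hm : m ≠ 0) (hn : n ≠ 0)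
    (hmn : Nat.Coprime m n) :
    Nat.gcd (a * m * n) h * Nat.gcd a h = Nat.gcd (a * m) h * Nat.gcd (a * n) h := by
  have hg1 : Nat.gcd (a * m * n) h ≠ 0 := fun hc => hh (Nat.eq_zero_of_gcd_eq_zero_right hc)
  have hg2 : Nat.gcd a h ≠ 0 := fun hc => hh (Nat.eq_zero_of_gcd_eq_zero_right hc)
  have hg3 : Nat.gcd (a * m) h ≠ 0 := fun hc => hh (Nat.eq_zero_of_gcd_eq_zero_right hc)
  have hg4 : Nat.gcd (a * n) h ≠ 0 := fun hc => hh (Nat.eq_zero_of_gcd_eq_zero_right hc)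
  apply eq_of_fact (by positivity) (by positivity)
  intro p
  rw [Nat.factorization_mul hg1 hg2, Nat.factorization_mul hg3 hg4,
    Nat.factorization_gcd (by positivity) hh, Nat.factorization_gcd ha hh,
    Nat.factorization_gcd (by positivity) hh, Nat.factorization_gcd (by positivity) hh,
    Nat.factorization_mul (by positivity) hn, Nat.factorization_mul ha hm,
    Nat.factorization_mul ha hn]
  simp only [Finsupp.add_apply, Finsupp.inf_apply, Finsupp.coe_add, Pi.add_apply]
  rcases fact_or hmn p with h0 | h0 <;> rw [h0] <;> simp <;> omega



lemma totient_mul_prime {p : ℕ} (x : ℕ) (hp : p.Prime) :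
    Nat.totient (x * p) = (if p ∣ x then p else p - 1) * Nat.totient x := by
  by_cases hd : p ∣ x
  · rw [mul_comm x p, Nat.totient_mul_of_prime_of_dvd hp hd, if_pos hd]
  · have hc : Nat.Coprime x p := ((Nat.Prime.coprime_iff_not_dvd hp).mpr hd).symm
    rw [Nat.totient_mul hc, Nat.totient_prime hp, if_neg hd, mul_comm]

lemma totient_swap : ∀ n : ℕ, n ≠ 0 → ∀ a b : ℕ, a ≠ 0 → b ≠ 0 →
    (∀ p, p.Prime → p ∣ n → (p ∣ a ↔ p ∣ b)) →
    Nat.totient (a * n) * Nat.totient b = Nat.totient a * Nat.totient (b * n) := by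
  intro n
  induction n using Nat.strong_induction_on with
  | _ n ih =>
    intro hn a b ha hb hcond
    rcases eq_or_ne n 1 with rfl | hn1
    · simp [mul_comm]
    · obtain ⟨p, hp, hpd⟩ := Nat.exists_prime_and_dvd hn1
      obtain ⟨n', rfl⟩ := hpd
      have hn' : n' ≠ 0 := by rintro rfl; simp at hn
      have hlt : n' < p * n' := by
        have := hp.two_le
        calc n' = 1 * n' := (one_mul n').symm
        _ < p * n' := by
          apply Nat.mul_lt_mul_of_lt_of_le (by omega) le_rfl (Nat.pos_of_ne_zero hn')
      have hp0 : p ≠ 0 := hp.pos.ne'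
      have h1 := ih n' hlt hn' (a * p) (b * p) (mul_ne_zero ha hp0) (mul_ne_zero hb hp0)
        (fun q hq hqn => by
          by_cases hqp : q = p
          · subst hqp; simp
          · have hqpn : q ∣ p * n' := Dvd.dvd.mul_left hqn p
            have := hcond q hq hqpn
            constructor
            · intro hqap
              rcases (Nat.Prime.dvd_mul hq).mp hqap with h' | h'
              · exact Dvd.dvd.mul_right (this.mp h') p
              · exact absurd (Nat.prime_dvd_prime_iff_eq hq hp |>.mp h') hqp
            · intro hqbp
              rcases (Nat.Prime.dvd_mul hq).mp hqbp with h' | h'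
              · exact Dvd.dvd.mul_right (this.mpr h') p
              · exact absurd (Nat.prime_dvd_prime_iff_eq hq hp |>.mp h') hqp)
      have h2 : Nat.totient (a * p) * Nat.totient b = Nat.totient a * Nat.totient (b * p) := by
        rw [totient_mul_prime a hp, totient_mul_prime b hp]
        have hiff := hcond p hp (Dvd.intro n' rfl)
        by_cases hpa : p ∣ a
        · rw [if_pos hpa, if_pos (hiff.mp hpa)]; ring
        · rw [if_neg hpa, if_neg (fun hh => hpa (hiff.mpr hh))]; ring
      have e1 : a * (p * n') = a * p * n' := by ring
      have e2 : b * (p * n') = b * p * n' := by ring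
      rw [e1, e2]
      have hφbp : 0 < Nat.totient (b * p) :=
        Nat.totient_pos.mpr (Nat.pos_of_ne_zero (mul_ne_zero hb hp0))
      apply Nat.eq_of_mul_eq_mul_left hφbp
      zify
      zify at h1 h2
      linear_combination (Nat.totient b : ℤ) * h1 + (Nat.totient (b * p * n') : ℤ) * h2

lemma totB {a m n : ℕ} (ha : a ≠ 0) (hm : m ≠ 0) (hn : n ≠ 0) (hmn : Nat.Coprime m n) :
    Nat.totient (a * m * n) * Nat.totient a = Nat.totient (a * m) * Nat.totient (a * n) :=
  totient_swap n hn (a * m) a (by positivity) ha (fun p hp hpn => by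
    constructor
    · intro hpam
      rcases (Nat.Prime.dvd_mul hp).mp hpam with h' | h'
      · exact h'
      · exfalso
        have : p ∣ 1 := hmn ▸ Nat.dvd_gcd h' hpn
        exact hp.one_lt.ne' (Nat.dvd_one.mp this)
    · intro hpa
      exact Dvd.dvd.mul_right hpa m)

lemma gcd_step_dvd {p t h : ℕ} (hp : p.Prime) (hp2 : p ≠ 2) (ht : t ≠ 0) (hh : h ≠ 0)
    (hpt : p ∣ t) :
    Nat.gcd (2 * p * t) h =
      (if h.factorization p ≤ t.factorization p then 1 else p) * Nat.gcd (2 * t) h := by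
  have hp0 : p ≠ 0 := hp.pos.ne'
  have h2t : (2 : ℕ) * t ≠ 0 := by positivity
  have h2pt : (2 : ℕ) * p * t ≠ 0 := by positivity
  have hg1 : Nat.gcd (2 * p * t) h ≠ 0 := fun hc => hh (Nat.eq_zero_of_gcd_eq_zero_right hc)
  have hg2 : Nat.gcd (2 * t) h ≠ 0 := fun hc => hh (Nat.eq_zero_of_gcd_eq_zero_right hc)
  have htp : 0 < t.factorization p := hp.factorization_pos_of_dvd ht hpt
  have h2p : (2 : ℕ).factorization p = 0 := by
    rw [Nat.Prime.factorization Nat.prime_two, Finsupp.single_apply]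
    simp [Ne.symm hp2]
  by_cases hcond : h.factorization p ≤ t.factorization p
  · rw [if_pos hcond, one_mul]
    apply eq_of_fact hg1 hg2
    intro q
    rw [Nat.factorization_gcd h2pt hh, Nat.factorization_gcd h2t hh,
      Nat.factorization_mul (by positivity) ht, Nat.factorization_mul two_ne_zero hp0,
      Nat.factorization_mul two_ne_zero ht]
    simp only [Finsupp.inf_apply, Finsupp.add_apply, Finsupp.coe_add, Pi.add_apply]
    by_cases hqp : q = p
    · subst hqp
      rw [hp.factorization, Finsupp.single_apply, if_pos rfl, h2p]
      omega
    · rw [hp.factorization, Finsupp.single_apply, if_neg (Ne.symm hqp)]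
      omega
  · rw [if_neg hcond]
    apply eq_of_fact hg1 (mul_ne_zero hp0 hg2)
    intro q
    rw [Nat.factorization_mul hp0 hg2,
      Nat.factorization_gcd h2pt hh, Nat.factorization_gcd h2t hh,
      Nat.factorization_mul (by positivity) ht, Nat.factorization_mul two_ne_zero hp0,
      Nat.factorization_mul two_ne_zero ht]
    simp only [Finsupp.inf_apply, Finsupp.add_apply, Finsupp.coe_add, Pi.add_apply]
    by_cases hqp : q = p
    · subst hqp
      rw [hp.factorization, Finsupp.single_apply, if_pos rfl, h2p]
      omega
    · rw [hp.factorization, Finsupp.single_apply, if_neg (Ne.symm hqp)]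
      omega

lemma gcd_step_coprime {p t h : ℕ} (hp : p.Prime) (hp2 : p ≠ 2) (ht : t ≠ 0) (hh : h ≠ 0)
    (hpt : ¬ p ∣ t) :
    Nat.gcd (2 * p * t) h = Nat.gcd p h * Nat.gcd (2 * t) h := by
  have hp0 : p ≠ 0 := hp.pos.ne'
  have h2t : (2 : ℕ) * t ≠ 0 := by positivity
  have h2pt : (2 : ℕ) * p * t ≠ 0 := by positivity
  have hg1 : Nat.gcd (2 * p * t) h ≠ 0 := fun hc => hh (Nat.eq_zero_of_gcd_eq_zero_right hc)
  have hg2 : Nat.gcd (2 * t) h ≠ 0 := fun hc => hh (Nat.eq_zero_of_gcd_eq_zero_right hc)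
  have hg3 : Nat.gcd p h ≠ 0 := fun hc => hh (Nat.eq_zero_of_gcd_eq_zero_right hc)
  have h2p : (2 : ℕ).factorization p = 0 := by
    rw [Nat.Prime.factorization Nat.prime_two, Finsupp.single_apply]
    simp [Ne.symm hp2]
  have htp : t.factorization p = 0 := Nat.factorization_eq_zero_of_not_dvd hpt
  apply eq_of_fact hg1 (mul_ne_zero hg3 hg2)
  intro q
  rw [Nat.factorization_mul hg3 hg2,
    Nat.factorization_gcd h2pt hh, Nat.factorization_gcd h2t hh, Nat.factorization_gcd hp0 hh,
    Nat.factorization_mul (by positivity) ht, Nat.factorization_mul two_ne_zero hp0,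
    Nat.factorization_mul two_ne_zero ht]
  simp only [Finsupp.inf_apply, Finsupp.add_apply, Finsupp.coe_add, Pi.add_apply]
  by_cases hqp : q = p
  · subst hqp
    rw [hp.factorization, Finsupp.single_apply, if_pos rfl, h2p, htp]
    omega
  · rw [hp.factorization, Finsupp.single_apply, if_neg (Ne.symm hqp)]
    omega



lemma odd_le_totient_sq : ∀ n : ℕ, ¬ 2 ∣ n → n ≤ n.totient ^ 2 := by
  intro n
  induction n using Nat.recOnPosPrimePosCoprime with
  | prime_pow p k hp hk =>
    intro hodd
    have hp2 : p ≠ 2 := by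
      rintro rfl
      exact hodd (dvd_pow_self 2 hk.ne')
    have hp3 : 3 ≤ p := by
      have := hp.two_le
      omega
    rw [Nat.totient_prime_pow hp hk]
    have h1 : p ≤ (p - 1) ^ 2 := by
      obtain ⟨q, rfl⟩ : ∃ q, p = q + 1 := ⟨p - 1, by omega⟩
      simp only [Nat.add_sub_cancel]
      nlinarith
    calc p ^ k = p ^ (k - 1) * p := by
          rw [← pow_succ]
          congr 1
          omega
      _ ≤ (p ^ (k - 1)) ^ 2 * (p - 1) ^ 2 := by
          apply Nat.mul_le_mul _ h1
          calc p ^ (k - 1) = p ^ (k-1) * 1 := (mul_one _).symm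
            _ ≤ p ^ (k-1) * p ^ (k-1) := Nat.mul_le_mul_left _ (Nat.one_le_pow _ _ hp.pos)
            _ = (p ^ (k-1)) ^ 2 := (sq _).symm
      _ = (p ^ (k - 1) * (p - 1)) ^ 2 := by ring
  | zero => intro hodd; exact absurd (dvd_zero 2) hodd
  | one => intro _; simp
  | coprime a b ha hb hab iha ihb =>
    intro hodd
    have hoa : ¬ 2 ∣ a := fun hd => hodd (hd.mul_right b)
    have hob : ¬ 2 ∣ b := fun hd => hodd (hd.mul_left a)
    rw [Nat.totient_mul hab, mul_pow]
    exact Nat.mul_le_mul (iha hoa) (ihb hob)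

lemma le_two_mul_totient_sq (n : ℕ) : n ≤ 2 * n.totient ^ 2 := by
  rcases eq_or_ne n 0 with rfl | hn
  · simp
  · set k := n.factorization 2 with hk
    have hsplit : 2 ^ k * (n / 2 ^ k) = n := Nat.ordProj_mul_ordCompl_eq_self n 2
    set m := n / 2 ^ k with hm
    have hmo : ¬ 2 ∣ m := Nat.not_dvd_ordCompl Nat.prime_two hn
    have hm0 : m ≠ 0 := by
      rintro h0
      rw [h0, mul_zero] at hsplit
      exact hn hsplit.symm
    have hcop : Nat.Coprime (2 ^ k) m :=
      Nat.Coprime.pow_left _ ((Nat.Prime.coprime_iff_not_dvd Nat.prime_two).mpr hmo)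
    have hφ : n.totient = (2 ^ k).totient * m.totient := by
      rw [← hsplit, Nat.totient_mul hcop]
    have hmb := odd_le_totient_sq m hmo
    rcases Nat.eq_zero_or_pos k with hk0 | hkpos
    · rw [← hsplit, hk0, pow_zero, one_mul] at *
      calc m ≤ m.totient ^ 2 := hmb
        _ ≤ 2 * m.totient ^ 2 := by omega
    · have hφ2 : (2 ^ k).totient = 2 ^ (k - 1) := by
        rw [Nat.totient_prime_pow Nat.prime_two hkpos]
        simp
      have h2k : 2 ^ k ≤ 2 * (2 ^ (k - 1)) ^ 2 := by
        have : 2 ^ k = 2 * 2 ^ (k - 1) := by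
          rw [← pow_succ']
          congr 1
          omega
        rw [this]
        have h1 : (1:ℕ) ≤ 2 ^ (k-1) := Nat.one_le_two_pow
        nlinarith
      calc n = 2 ^ k * m := hsplit.symm
        _ ≤ (2 * (2 ^ (k - 1)) ^ 2) * (m.totient ^ 2) := Nat.mul_le_mul h2k hmb
        _ = 2 * (2 ^ (k - 1) * m.totient) ^ 2 := by ring
        _ = 2 * n.totient ^ 2 := by rw [hφ, hφ2]

lemma summable_inv_mul_totient :
    Summable (fun m : ℕ => 1 / ((m : ℝ) * (Nat.totient m : ℝ))) := by
  have hs : Summable (fun m : ℕ => Real.sqrt 2 * (1 / (m : ℝ) ^ (3/2 : ℝ))) :=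
    (Real.summable_one_div_nat_rpow.mpr (by norm_num)).mul_left _
  apply Summable.of_nonneg_of_le (fun m => by positivity) _ hs
  intro m
  rcases Nat.eq_zero_or_pos m with rfl | hm
  · simp
  · have hφ : 0 < Nat.totient m := Nat.totient_pos.mpr hm
    have hmr : (0:ℝ) < m := by exact_mod_cast hm
    have hφr : (0:ℝ) < (Nat.totient m : ℝ) := by exact_mod_cast hφ
    have key : (m:ℝ) ≤ 2 * (Nat.totient m : ℝ) ^ 2 := by
      exact_mod_cast le_two_mul_totient_sq m
    have hsqrt : Real.sqrt m ≤ Real.sqrt 2 * (Nat.totient m : ℝ) := by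
      calc Real.sqrt m ≤ Real.sqrt (2 * (Nat.totient m : ℝ) ^ 2) := Real.sqrt_le_sqrt key
        _ = Real.sqrt 2 * (Nat.totient m : ℝ) := by
          rw [Real.sqrt_mul (by norm_num), Real.sqrt_sq hφr.le]
    have hr32 : (m:ℝ) ^ (3/2 : ℝ) = m * Real.sqrt m := by
      have h32 : (3/2 : ℝ) = 1 + 1/2 := by norm_num
      rw [h32, Real.rpow_add hmr, Real.rpow_one, ← Real.sqrt_eq_rpow]
    have h2 : (m:ℝ) ^ (3/2 : ℝ) ≤ Real.sqrt 2 * ((m:ℝ) * (Nat.totient m : ℝ)) := by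
      rw [hr32]
      calc (m:ℝ) * Real.sqrt m ≤ (m:ℝ) * (Real.sqrt 2 * (Nat.totient m : ℝ)) :=
            mul_le_mul_of_nonneg_left hsqrt hmr.le
        _ = Real.sqrt 2 * ((m:ℝ) * (Nat.totient m : ℝ)) := by ring
    rw [mul_one_div, div_le_div_iff₀ (by positivity) (by positivity), one_mul]
    exact h2

noncomputable def Gf (h t : ℕ) (m : ℕ) : ℝ :=
  if 2 ∣ m then 0 else
    (moebius m : ℝ) * (Nat.gcd (2 * m * t) h : ℝ) * (Nat.totient (2 * t) : ℝ) /
      ((Nat.gcd (2 * t) h : ℝ) * m * (Nat.totient (2 * m * t) : ℝ))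

lemma Gf_zero (h t : ℕ) : Gf h t 0 = 0 := by simp [Gf]

lemma Gf_one (h t : ℕ) (hh : h ≠ 0) (ht : t ≠ 0) : Gf h t 1 = 1 := by
  have hg : Nat.gcd (2 * t) h ≠ 0 := fun hc => hh (Nat.eq_zero_of_gcd_eq_zero_right hc)
  have hφ : (0:ℕ) < Nat.totient (2 * t) := Nat.totient_pos.mpr (by positivity)
  rw [Gf, if_neg (by norm_num)]
  rw [mul_one 2]
  field_simp
  simp

lemma Gf_mul (h t : ℕ) (hh : h ≠ 0) (ht : t ≠ 0) {m n : ℕ} (hmn : Nat.Coprime m n) :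
    Gf h t (m * n) = Gf h t m * Gf h t n := by
  by_cases h2m : 2 ∣ m
  · simp only [Gf]
    rw [if_pos (h2m.mul_right n), if_pos h2m, zero_mul]
  by_cases h2n : 2 ∣ n
  · simp only [Gf]
    rw [if_pos (h2n.mul_left m), if_pos h2n, mul_zero]
  have h2mn : ¬ 2 ∣ m * n := by
    rw [Nat.Prime.dvd_mul Nat.prime_two]
    tauto
  have hm0 : m ≠ 0 := by rintro rfl; exact h2m (dvd_zero 2)
  have hn0 : n ≠ 0 := by rintro rfl; exact h2n (dvd_zero 2)
  have h2t : (2:ℕ) * t ≠ 0 := by positivity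
  have hμ : (moebius (m * n) : ℝ) = (moebius m : ℝ) * (moebius n : ℝ) := by
    rw_mod_cast [isMultiplicative_moebius.map_mul_of_coprime hmn]
  have hA := gcdA h2t hh hm0 hn0 hmn
  have hB := totB h2t hm0 hn0 hmn
  have hAr : (Nat.gcd (2 * t * m * n) h : ℝ) * (Nat.gcd (2 * t) h : ℝ)
      = (Nat.gcd (2 * t * m) h : ℝ) * (Nat.gcd (2 * t * n) h : ℝ) := by exact_mod_cast hA
  have hBr : (Nat.totient (2 * t * m * n) : ℝ) * (Nat.totient (2 * t) : ℝ)
      = (Nat.totient (2 * t * m) : ℝ) * (Nat.totient (2 * t * n) : ℝ) := by exact_mod_cast hB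
  rw [Gf, if_neg h2mn, Gf, if_neg h2m, Gf, if_neg h2n]
  have e1 : 2 * (m * n) * t = 2 * t * m * n := by ring
  have e2 : 2 * m * t = 2 * t * m := by ring
  have e3 : 2 * n * t = 2 * t * n := by ring
  rw [e1, e2, e3]
  have hg0 : (Nat.gcd (2 * t) h : ℝ) ≠ 0 := by
    exact_mod_cast fun hc => hh (Nat.eq_zero_of_gcd_eq_zero_right (by exact_mod_cast hc))
  have hφ0 : (Nat.totient (2 * t) : ℝ) ≠ 0 := by
    have : (0:ℕ) < Nat.totient (2 * t) := Nat.totient_pos.mpr (by positivity)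
    positivity
  have hφ1 : (Nat.totient (2 * t * m * n) : ℝ) ≠ 0 := by
    have : (0:ℕ) < Nat.totient (2 * t * m * n) :=
      Nat.totient_pos.mpr (by positivity)
    positivity
  have hφ2 : (Nat.totient (2 * t * m) : ℝ) ≠ 0 := by
    have : (0:ℕ) < Nat.totient (2 * t * m) := Nat.totient_pos.mpr (by positivity)
    positivity
  have hφ3 : (Nat.totient (2 * t * n) : ℝ) ≠ 0 := by
    have : (0:ℕ) < Nat.totient (2 * t * n) := Nat.totient_pos.mpr (by positivity)
    positivity
  have hmr : (m:ℝ) ≠ 0 := Nat.cast_ne_zero.mpr hm0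
  have hnr : (n:ℝ) ≠ 0 := Nat.cast_ne_zero.mpr hn0
  rw [hμ]
  push_cast
  field_simp
  linear_combination ((moebius m : ℝ) * (moebius n : ℝ) *
      (Nat.totient (2*t*m) : ℝ) * (Nat.totient (2*t*n) : ℝ)) * hAr -
    ((moebius m : ℝ) * (moebius n : ℝ) *
      (Nat.gcd (2*t*m) h : ℝ) * (Nat.gcd (2*t*n) h : ℝ)) * hBr

lemma abs_moebius_le_one (m : ℕ) : |(moebius m : ℝ)| ≤ 1 := by
  by_cases hs : Squarefree m
  · rw [moebius_apply_of_squarefree hs]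
    push_cast
    rw [abs_pow, abs_neg, abs_one, one_pow]
  · rw [moebius_eq_zero_of_not_squarefree hs]
    simp

lemma Gf_summable (h t : ℕ) (hh : h ≠ 0) (ht : t ≠ 0) :
    Summable (fun m => ‖Gf h t m‖) := by
  have hbound : ∀ m, ‖Gf h t m‖ ≤ (h : ℝ) * (1 / ((m : ℝ) * (Nat.totient m : ℝ))) := by
    intro m
    rcases Nat.eq_zero_or_pos m with rfl | hm
    · simp [Gf]
    by_cases h2m : 2 ∣ m
    · rw [Gf, if_pos h2m, norm_zero]
      positivity
    rw [Gf, if_neg h2m]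
    have hφm : (0:ℕ) < Nat.totient m := Nat.totient_pos.mpr hm
    have hφ2t : (0:ℕ) < Nat.totient (2 * t) :=
      Nat.totient_pos.mpr (by positivity)
    have hφ2mt : (0:ℕ) < Nat.totient (2 * m * t) :=
      Nat.totient_pos.mpr (Nat.pos_of_ne_zero (by positivity))
    have hg2t : (0:ℕ) < Nat.gcd (2 * t) h :=
      Nat.pos_of_ne_zero (fun hc => hh (Nat.eq_zero_of_gcd_eq_zero_right hc))
    have hsup : Nat.totient (2 * t) * Nat.totient m ≤ Nat.totient (2 * m * t) := by
      have := Nat.totient_super_multiplicative (2 * t) m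
      have e : 2 * t * m = 2 * m * t := by ring
      rwa [e] at this
    have hgle : Nat.gcd (2 * m * t) h ≤ h := Nat.le_of_dvd (Nat.pos_of_ne_zero hh) (Nat.gcd_dvd_right _ _)
    rw [norm_div, norm_mul, norm_mul]
    have step1 : ‖(moebius m : ℝ)‖ * ‖(Nat.gcd (2 * m * t) h : ℝ)‖ * ‖(Nat.totient (2 * t) : ℝ)‖
        ≤ (h : ℝ) * (Nat.totient (2 * t) : ℝ) := by
      rw [Real.norm_eq_abs, Real.norm_eq_abs, Real.norm_eq_abs, Nat.abs_cast, Nat.abs_cast]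
      calc |(moebius m : ℝ)| * (Nat.gcd (2 * m * t) h : ℝ) * (Nat.totient (2 * t) : ℝ)
          ≤ 1 * (h : ℝ) * (Nat.totient (2 * t) : ℝ) := by
            apply mul_le_mul_of_nonneg_right _ (by positivity)
            apply mul_le_mul (abs_moebius_le_one m) (by exact_mod_cast hgle) (by positivity) zero_le_one
        _ = (h : ℝ) * (Nat.totient (2 * t) : ℝ) := by ring
    have step2 : (1:ℝ) * ((m : ℝ) * ((Nat.totient (2*t) : ℝ) * (Nat.totient m : ℝ)))
        ≤ ‖(Nat.gcd (2 * t) h : ℝ) * m * (Nat.totient (2 * m * t) : ℝ)‖ := by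
      rw [Real.norm_eq_abs, abs_of_nonneg (by positivity)]
      have h1 : (1:ℝ) ≤ (Nat.gcd (2 * t) h : ℝ) := by exact_mod_cast hg2t
      have h2 : (Nat.totient (2*t) : ℝ) * (Nat.totient m : ℝ) ≤ (Nat.totient (2 * m * t) : ℝ) := by
        exact_mod_cast hsup
      calc (1:ℝ) * ((m : ℝ) * ((Nat.totient (2*t) : ℝ) * (Nat.totient m : ℝ)))
          ≤ (Nat.gcd (2 * t) h : ℝ) * ((m:ℝ) * (Nat.totient (2 * m * t) : ℝ)) := by
            apply mul_le_mul h1 _ (by positivity) (by positivity)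
            exact mul_le_mul_of_nonneg_left h2 (by positivity)
        _ = (Nat.gcd (2 * t) h : ℝ) * (m:ℝ) * (Nat.totient (2 * m * t) : ℝ) := by ring
    have hden : (0:ℝ) < (1:ℝ) * ((m : ℝ) * ((Nat.totient (2*t) : ℝ) * (Nat.totient m : ℝ))) := by
      have : (0:ℝ) < (m:ℝ) := by exact_mod_cast hm
      have h2 : (0:ℝ) < (Nat.totient (2*t) : ℝ) := by exact_mod_cast hφ2t
      have h3 : (0:ℝ) < (Nat.totient m : ℝ) := by exact_mod_cast hφm
      positivity
    calc ‖(moebius m : ℝ)‖ * ‖(Nat.gcd (2 * m * t) h : ℝ)‖ * ‖(Nat.totient (2 * t) : ℝ)‖ /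
          ‖(Nat.gcd (2 * t) h : ℝ) * m * (Nat.totient (2 * m * t) : ℝ)‖
        ≤ ((h : ℝ) * (Nat.totient (2 * t) : ℝ)) /
            ((1:ℝ) * ((m : ℝ) * ((Nat.totient (2*t) : ℝ) * (Nat.totient m : ℝ)))) := by
          apply div_le_div₀ (by positivity) step1 hden step2
      _ = (h : ℝ) * (1 / ((m : ℝ) * (Nat.totient m : ℝ))) := by
          have h2 : (Nat.totient (2*t) : ℝ) ≠ 0 := by
            have : (0:ℝ) < (Nat.totient (2*t) : ℝ) := by exact_mod_cast hφ2t
            positivity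
          field_simp
  apply Summable.of_nonneg_of_le (fun m => norm_nonneg _) hbound
  exact summable_inv_mul_totient.mul_left _

lemma Gf_prime_pow_zero {p e : ℕ} (h t : ℕ) (hp : p.Prime) (he : 2 ≤ e) :
    Gf h t (p ^ e) = 0 := by
  by_cases h2 : 2 ∣ p ^ e
  · rw [Gf, if_pos h2]
  · rw [Gf, if_neg h2]
    rw [moebius_apply_prime_pow hp (by omega), if_neg (by omega)]
    simp

lemma Gf_local (h t p : ℕ) (hp : p.Prime) (hh : h ≠ 0) (ht : t ≠ 0) :
    ∑' e : ℕ, Gf h t (p ^ e) = 1 + Gf h t p := by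
  rw [tsum_eq_sum (s := ({0, 1} : Finset ℕ))
    (fun e he => Gf_prime_pow_zero h t hp (by
      simp only [Finset.mem_insert, Finset.mem_singleton] at he
      omega))]
  rw [Finset.sum_insert (by norm_num), Finset.sum_singleton, pow_zero, pow_one,
    Gf_one h t hh ht]

lemma not_two_dvd_odd_prime {p : ℕ} (hp : p.Prime) (hp2 : p ≠ 2) : ¬ 2 ∣ p :=
  fun hd => hp2 ((Nat.prime_dvd_prime_iff_eq Nat.prime_two hp).mp hd).symm

lemma Gf_odd_prime_not_dvd {p : ℕ} (h t : ℕ) (hp : p.Prime) (hp2 : p ≠ 2) (hh : h ≠ 0)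
    (ht : t ≠ 0) (hpt : ¬ p ∣ t) :
    Gf h t p = -((Nat.gcd p h : ℝ) / ((p:ℝ) * ((p:ℝ) - 1))) := by
  rw [Gf, if_neg (not_two_dvd_odd_prime hp hp2)]
  rw [moebius_apply_prime hp]
  rw [gcd_step_coprime hp hp2 ht hh hpt]
  have hpd2t : ¬ p ∣ 2 * t := by
    rw [Nat.Prime.dvd_mul hp]
    push_neg
    exact ⟨fun hd => hp2 ((Nat.prime_dvd_prime_iff_eq hp Nat.prime_two).mp hd), hpt⟩
  have e1 : 2 * p * t = p * (2 * t) := by ring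
  rw [e1, Nat.totient_mul ((Nat.Prime.coprime_iff_not_dvd hp).mpr hpd2t), Nat.totient_prime hp]
  have hg0 : (Nat.gcd (2 * t) h : ℝ) ≠ 0 := by
    have : Nat.gcd (2 * t) h ≠ 0 := fun hc => hh (Nat.eq_zero_of_gcd_eq_zero_right hc)
    exact_mod_cast this
  have hφ0 : (Nat.totient (2 * t) : ℝ) ≠ 0 := by
    have : (0:ℕ) < Nat.totient (2 * t) := Nat.totient_pos.mpr (by positivity)
    positivity
  have hpr : (2:ℝ) ≤ (p:ℝ) := by exact_mod_cast hp.two_le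
  have hp1 : ((p - 1 : ℕ) : ℝ) = (p:ℝ) - 1 := by
    rw [Nat.cast_sub hp.one_le, Nat.cast_one]
  have hpne : (p:ℝ) ≠ 0 := by linarith
  have hp1ne : (p:ℝ) - 1 ≠ 0 := by linarith
  push_cast [hp1]
  field_simp

lemma Gf_odd_prime_dvd {p : ℕ} (h t : ℕ) (hp : p.Prime) (hp2 : p ≠ 2) (hh : h ≠ 0)
    (ht : t ≠ 0) (hpt : p ∣ t) :
    Gf h t p = if h.factorization p ≤ t.factorization p then
      -(1 / ((p:ℝ) * (p:ℝ))) else -(1 / (p:ℝ)) := by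
  rw [Gf, if_neg (not_two_dvd_odd_prime hp hp2)]
  rw [moebius_apply_prime hp]
  rw [gcd_step_dvd hp hp2 ht hh hpt]
  have e1 : 2 * p * t = p * (2 * t) := by ring
  rw [e1, Nat.totient_mul_of_prime_of_dvd hp (hpt.mul_left 2)]
  have hg0 : (Nat.gcd (2 * t) h : ℝ) ≠ 0 := by
    have : Nat.gcd (2 * t) h ≠ 0 := fun hc => hh (Nat.eq_zero_of_gcd_eq_zero_right hc)
    exact_mod_cast this
  have hφ0 : (Nat.totient (2 * t) : ℝ) ≠ 0 := by
    have : (0:ℕ) < Nat.totient (2 * t) := Nat.totient_pos.mpr (by positivity)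
    positivity
  have hpr : (2:ℝ) ≤ (p:ℝ) := by exact_mod_cast hp.two_le
  have hpne : (p:ℝ) ≠ 0 := by linarith
  by_cases hcond : h.factorization p ≤ t.factorization p
  · rw [if_pos hcond, if_pos hcond]
    push_cast
    field_simp
  · rw [if_neg hcond, if_neg hcond]
    push_cast
    field_simp

lemma Gf_two_val (h t : ℕ) : Gf h t 2 = 0 := by
  rw [Gf, if_pos dvd_rfl]


end WagstaffAux

open WagstaffAux ArithmeticFunction in
/-- If `h` is even and `t` is odd, then
`S(h,t,2) = -(gcd(t,h)/t²)·∏_{p ∣ t, h_p ∣ t_p}(1+1/p)·∏_{p ∤ 2t}(1 - gcd(p,h)/(p(p-1)))`. -/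
theorem wagstaff_m_two (h t : ℕ) (hh : 0 < h) (ht : 0 < t)
    (hhe : 2 ∣ h) (hto : ¬ 2 ∣ t) :
    wagstaffS h t 2 = -(((Nat.gcd t h : ℝ) / (t : ℝ) ^ 2) *
      (∏ p ∈ t.primeFactors, if ordProj[p] h ∣ ordProj[p] t then 1 + 1 / (p : ℝ) else 1) *
      ∏' p : Nat.Primes,
        (if (p : ℕ) ∣ 2 * t then 1
         else 1 - (Nat.gcd (p : ℕ) h : ℝ) / ((p : ℝ) * ((p : ℝ) - 1)))) := by
  classical
  have ht0 : t ≠ 0 := ht.ne'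
  have hh0 : h ≠ 0 := hh.ne'
  set F : ℕ → ℝ := fun n => if 0 < n ∧ 2 ∣ n * t then
      (ArithmeticFunction.moebius n : ℝ) * (Nat.gcd (n * t) h : ℝ) /
        (↑(n * t) * ↑(Nat.totient (n * t)))
    else 0 with hF
  have hws : wagstaffS h t 2 = ∑' n, F n := rfl
  have hinj : Function.Injective (fun m : ℕ => 2 * m) := fun a b hab => by
    simp only at hab
    omega
  have hsupp : Function.support F ⊆ Set.range (fun m : ℕ => 2 * m) := by
    intro n hn
    rw [Function.mem_support] at hn
    by_cases hcnd : 0 < n ∧ 2 ∣ n * t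
    · obtain ⟨hn0, hdvd⟩ := hcnd
      have h2n : 2 ∣ n := by
        rcases (Nat.Prime.dvd_mul Nat.prime_two).mp hdvd with h' | h'
        · exact h'
        · exact absurd h' hto
      obtain ⟨k, rfl⟩ := h2n
      exact ⟨k, rfl⟩
    · exact absurd (if_neg hcnd) hn
  have hsub : ∑' n, F n = ∑' m, F (2 * m) := (hinj.tsum_eq hsupp).symm
  set c : ℝ := (Nat.gcd (2 * t) h : ℝ) / ((2 * (t : ℝ)) * (Nat.totient (2 * t) : ℝ)) with hc
  have hg0r : (Nat.gcd (2 * t) h : ℝ) ≠ 0 := by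
    have : Nat.gcd (2 * t) h ≠ 0 := fun hx => hh0 (Nat.eq_zero_of_gcd_eq_zero_right hx)
    exact_mod_cast this
  have hφ2tr : (Nat.totient (2 * t) : ℝ) ≠ 0 := by
    have : (0:ℕ) < Nat.totient (2 * t) := Nat.totient_pos.mpr (by positivity)
    positivity
  have htr : (t : ℝ) ≠ 0 := Nat.cast_ne_zero.mpr ht0
  have hkey : ∀ m : ℕ, F (2 * m) = -(c * Gf h t m) := by
    intro m
    rcases Nat.eq_zero_or_pos m with rfl | hm
    · simp [hF, Gf_zero]
    by_cases h2m : 2 ∣ m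
    · have hns : ¬ Squarefree (2 * m) := by
        obtain ⟨k, rfl⟩ := h2m
        intro hs
        have := hs 2 ⟨k, by ring⟩
        norm_num at this
      have hμ : moebius (2 * m) = 0 := moebius_eq_zero_of_not_squarefree hns
      rw [hF]
      simp only
      rw [if_pos ⟨by positivity, ⟨m * t, by ring⟩⟩, hμ, Gf, if_pos h2m]
      simp
    · have hcop2 : Nat.Coprime 2 m := (Nat.Prime.coprime_iff_not_dvd Nat.prime_two).mpr h2m
      have hμz : moebius (2 * m) = - moebius m := by
        rw [isMultiplicative_moebius.map_mul_of_coprime hcop2,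
          moebius_apply_prime Nat.prime_two]
        ring
      rw [hF]
      simp only
      rw [if_pos ⟨by positivity, ⟨m * t, by ring⟩⟩, hμz, Gf, if_neg h2m]
      have hφ2mtr : (Nat.totient (2 * m * t) : ℝ) ≠ 0 := by
        have : (0:ℕ) < Nat.totient (2 * m * t) :=
          Nat.totient_pos.mpr (Nat.pos_of_ne_zero (by positivity))
        positivity
      have hmr : (m : ℝ) ≠ 0 := Nat.cast_ne_zero.mpr hm.ne'
      rw [hc]
      push_cast
      field_simp
  have hsum2 : ∑' m, F (2 * m) = -(c * ∑' m, Gf h t m) := by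
    calc ∑' m, F (2 * m) = ∑' m, -(c * Gf h t m) := tsum_congr hkey
      _ = -(c * ∑' m, Gf h t m) := by rw [tsum_neg, tsum_mul_left]
  set Sg := ∑' m, Gf h t m with hSg
  have heuler : HasProd (fun p : Nat.Primes => ∑' e : ℕ, Gf h t ((p : ℕ) ^ e)) Sg :=
    EulerProduct.eulerProduct_hasProd (Gf_one h t hh0 ht0)
      (fun hmn => Gf_mul h t hh0 ht0 hmn) (Gf_summable h t hh0 ht0) (Gf_zero h t)
  set M : Nat.Primes → ℝ := fun p =>
    if (p : ℕ) ∣ 2 * t then 1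
    else 1 - (Nat.gcd (p : ℕ) h : ℝ) / ((p : ℝ) * ((p : ℝ) - 1)) with hM
  set Dval : ℕ → ℝ := fun p =>
    if p ∣ t then
      (if h.factorization p ≤ t.factorization p then 1 - 1 / ((p:ℝ) * (p:ℝ))
       else 1 - 1 / (p:ℝ))
    else 1 with hDval
  set D : Nat.Primes → ℝ := fun p => Dval (p : ℕ) with hD
  have hDpos : ∀ p : Nat.Primes, 0 < D p := by
    rintro ⟨p, hp⟩
    simp only [hD, hDval]
    by_cases hpt : p ∣ t
    · have hp2 : p ≠ 2 := fun he => hto (he ▸ hpt)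
      have hp3 : 3 ≤ p := by have := hp.two_le; omega
      have hpr : (3:ℝ) ≤ (p:ℝ) := by exact_mod_cast hp3
      rw [if_pos hpt]
      have h1 : 1 / ((p:ℝ) * (p:ℝ)) < 1 := by
        rw [div_lt_one (by nlinarith)]
        nlinarith
      have h2 : 1 / (p:ℝ) < 1 := by
        rw [div_lt_one (by linarith)]
        linarith
      split <;> linarith
    · rw [if_neg hpt]
      norm_num
  have hMD : ∀ p : Nat.Primes, ∑' e : ℕ, Gf h t ((p : ℕ) ^ e) = M p * D p := by
    rintro ⟨p, hp⟩
    rw [Gf_local h t p hp hh0 ht0]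
    simp only [hM, hD, hDval]
    by_cases hp2 : p = 2
    · subst hp2
      rw [Gf_two_val, if_pos (Dvd.intro t rfl), if_neg hto]
      norm_num
    · by_cases hpt : p ∣ t
      · rw [Gf_odd_prime_dvd h t hp hp2 hh0 ht0 hpt, if_pos (hpt.mul_left 2), if_pos hpt]
        split <;> ring
      · have hpd2t : ¬ p ∣ 2 * t := by
          rw [Nat.Prime.dvd_mul hp]
          push_neg
          exact ⟨fun hd => hp2 ((Nat.prime_dvd_prime_iff_eq hp Nat.prime_two).mp hd), hpt⟩
        rw [Gf_odd_prime_not_dvd h t hp hp2 hh0 ht0 hpt, if_neg hpd2t, if_neg hpt]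
        ring
  have heuler2 : HasProd (fun p : Nat.Primes => M p * D p) Sg := by
    have hfe : (fun p : Nat.Primes => ∑' e : ℕ, Gf h t ((p : ℕ) ^ e))
        = fun p => M p * D p := funext hMD
    rwa [hfe] at heuler
  set S : Finset Nat.Primes := Finset.subtype (fun p => p.Prime) t.primeFactors with hS
  have hDone : ∀ q ∉ S, D q = 1 := by
    rintro ⟨q, hq⟩ hqS
    have hmem : q ∉ t.primeFactors := fun hmem => hqS (Finset.mem_subtype.mpr hmem)
    have hqt : ¬ q ∣ t := fun hd => hmem (Nat.mem_primeFactors.mpr ⟨hq, hd, ht0⟩)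
    simp only [hD, hDval]
    rw [if_neg hqt]
  have hDprod : HasProd D (∏ q ∈ S, D q) := hasProd_prod_of_ne_finset_one hDone
  have hDinv : HasProd (fun p => (D p)⁻¹) (∏ q ∈ S, D q)⁻¹ := by
    rw [← Finset.prod_inv_distrib]
    exact hasProd_prod_of_ne_finset_one (fun q hq => by rw [hDone q hq, inv_one])
  set PD := ∏ q ∈ S, D q with hPD
  have hPDpos : 0 < PD := Finset.prod_pos (fun q _ => hDpos q)
  have hMhas : HasProd M (Sg * PD⁻¹) := by
    have h1 := heuler2.mul hDinv
    have h2 : (fun p : Nat.Primes => (M p * D p) * (D p)⁻¹) = M := by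
      funext p
      rw [mul_assoc, mul_inv_cancel₀ (hDpos p).ne', mul_one]
    rwa [h2] at h1
  have htprodM : ∏' p : Nat.Primes, M p = Sg * PD⁻¹ := hMhas.tprod_eq
  have hSgEq : Sg = PD * ∏' p : Nat.Primes, M p := by
    rw [htprodM]
    field_simp
  have hPDval : PD = ∏ p ∈ t.primeFactors,
      (if h.factorization p ≤ t.factorization p then 1 - 1 / ((p:ℝ) * (p:ℝ))
       else 1 - 1 / (p:ℝ)) := by
    have e0 : PD = ∏ p ∈ t.primeFactors, Dval p := by
      rw [hPD, hS]
      exact Finset.prod_subtype_of_mem Dval (fun x hx => Nat.prime_of_mem_primeFactors hx)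
    rw [e0]
    exact Finset.prod_congr rfl (fun p hp => by
      simp only [hDval]
      rw [if_pos (Nat.dvd_of_mem_primeFactors hp)])
  have hprimepos : ∀ p ∈ t.primeFactors, (0:ℝ) < (p:ℝ) := fun p hp => by
    exact_mod_cast (Nat.prime_of_mem_primeFactors hp).pos
  have hBne : (∏ p ∈ t.primeFactors, (p:ℝ)) ≠ 0 := (Finset.prod_pos hprimepos).ne'
  have hφtr : (Nat.totient t : ℝ) ≠ 0 := by
    have : (0:ℕ) < Nat.totient t := Nat.totient_pos.mpr ht
    positivity
  have hphi : (Nat.totient t : ℝ) * ∏ p ∈ t.primeFactors, (p:ℝ)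
      = (t:ℝ) * ∏ p ∈ t.primeFactors, ((p:ℝ) - 1) := by
    have hnat := Nat.totient_mul_prod_primeFactors t
    have h1 : (Nat.totient t : ℝ) * ∏ p ∈ t.primeFactors, (p:ℝ)
        = ((Nat.totient t * ∏ p ∈ t.primeFactors, p : ℕ) : ℝ) := by
      push_cast
      ring
    have h2 : ((t * ∏ p ∈ t.primeFactors, (p - 1) : ℕ) : ℝ)
        = (t:ℝ) * ∏ p ∈ t.primeFactors, ((p:ℝ) - 1) := by
      push_cast
      congr 1
      exact Finset.prod_congr rfl (fun p hp => by
        rw [Nat.cast_sub (Nat.prime_of_mem_primeFactors hp).one_le, Nat.cast_one])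
    rw [h1, hnat, h2]
  have hφ2t_eq : Nat.totient (2 * t) = Nat.totient t := by
    rw [Nat.totient_mul ((Nat.Prime.coprime_iff_not_dvd Nat.prime_two).mpr hto),
      Nat.totient_two, one_mul]
  have hgcd2t : Nat.gcd (2 * t) h = 2 * Nat.gcd t h := by
    obtain ⟨h', rfl⟩ := hhe
    rw [Nat.gcd_mul_left]
    congr 1
    exact (Nat.Coprime.gcd_mul_left_cancel_right h'
      ((Nat.Prime.coprime_iff_not_dvd Nat.prime_two).mpr hto)).symm
  have hscal : c * PD = ((Nat.gcd t h : ℝ) / (t : ℝ) ^ 2) *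
      ∏ p ∈ t.primeFactors, (if ordProj[p] h ∣ ordProj[p] t then 1 + 1 / (p : ℝ) else 1) := by
    rw [hPDval]
    have hsplit : (∏ p ∈ t.primeFactors,
        (if h.factorization p ≤ t.factorization p then 1 - 1 / ((p:ℝ) * (p:ℝ))
         else 1 - 1 / (p:ℝ)))
        = (∏ p ∈ t.primeFactors,
            (if ordProj[p] h ∣ ordProj[p] t then 1 + 1 / (p : ℝ) else 1)) *
          ∏ p ∈ t.primeFactors, (1 - 1 / (p:ℝ)) := by
      rw [← Finset.prod_mul_distrib]
      apply Finset.prod_congr rfl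
      intro p hp
      have hp' := Nat.prime_of_mem_primeFactors hp
      have hcond : (ordProj[p] h ∣ ordProj[p] t) ↔ h.factorization p ≤ t.factorization p :=
        Nat.pow_dvd_pow_iff_le_right hp'.one_lt
      have hpne : (p:ℝ) ≠ 0 := (hprimepos p hp).ne'
      by_cases hcc : h.factorization p ≤ t.factorization p
      · rw [if_pos hcc, if_pos (hcond.mpr hcc)]
        field_simp
        ring
      · rw [if_neg hcc, if_neg (fun hx => hcc (hcond.mp hx))]
        ring
    rw [hsplit]
    have hprod_div : ∏ p ∈ t.primeFactors, (1 - 1/(p:ℝ))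
        = (∏ p ∈ t.primeFactors, ((p:ℝ) - 1)) / ∏ p ∈ t.primeFactors, (p:ℝ) := by
      rw [← Finset.prod_div_distrib]
      apply Finset.prod_congr rfl
      intro p hp
      have hpne : (p:ℝ) ≠ 0 := (hprimepos p hp).ne'
      field_simp
    rw [hprod_div, hc]
    have hgcast : (Nat.gcd (2 * t) h : ℝ) = 2 * (Nat.gcd t h : ℝ) := by
      exact_mod_cast hgcd2t
    have hφcast : (Nat.totient (2 * t) : ℝ) = (Nat.totient t : ℝ) := by
      exact_mod_cast hφ2t_eq
    rw [hgcast, hφcast]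
    field_simp
    linear_combination (-1 : ℝ) * hphi
  rw [hws, hsub, hsum2, hSgEq]
  calc -(c * (PD * ∏' p : Nat.Primes, M p))
      = -((c * PD) * ∏' p : Nat.Primes, M p) := by ring
    _ = -(((Nat.gcd t h : ℝ) / (t : ℝ) ^ 2) *
          (∏ p ∈ t.primeFactors,
            (if ordProj[p] h ∣ ordProj[p] t then 1 + 1 / (p : ℝ) else 1)) *
          ∏' p : Nat.Primes, M p) := by rw [hscal]
end

section
/- Let h and t be positive integers such that it is not the case that h is even and t is odd. Then S(h,t,2t_2) = −S(h,t,1)/3 if lcm(2,h_2) divides t_2, and S(h,t,2t_2) = −S(h,t,1) if lcm(2,h_2) does not divide t_2. -/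
open Polynomial

section WagstaffAux

private theorem wag_odd_le_totient_sq : ∀ n : ℕ, ¬ 2 ∣ n → n ≤ Nat.totient n ^ 2 := by
  intro n
  induction n using Nat.recOnPosPrimePosCoprime with
  | prime_pow p k hp hk =>
    intro hodd
    have h3 : 3 ≤ p := by
      rcases hp.two_le.lt_or_eq with h | h
      · omega
      · exfalso; exact hodd (h ▸ dvd_pow_self p hk.ne')
    rw [Nat.totient_prime_pow hp hk, mul_pow]
    calc p ^ k = p ^ (k-1) * p := by rw [← pow_succ]; congr 1; omega
      _ ≤ (p^(k-1))^2 * (p-1)^2 := by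
          apply Nat.mul_le_mul (Nat.le_self_pow two_ne_zero _)
          obtain ⟨q, rfl⟩ : ∃ q, p = q + 3 := ⟨p - 3, by omega⟩
          have : q + 3 - 1 = q + 2 := by omega
          rw [this]; nlinarith
  | zero => intro h; simp at h
  | one => intro _; simp
  | coprime a b ha hb hab iha ihb =>
    intro hodd
    rw [Nat.totient_mul hab, mul_pow]
    exact Nat.mul_le_mul (iha fun hd => hodd (hd.mul_right b)) (ihb fun hd => hodd (hd.mul_left a))

private theorem wag_le_two_mul_totient_sq (n : ℕ) : n ≤ 2 * Nat.totient n ^ 2 := by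
  rcases eq_or_ne n 0 with rfl | hn
  · simp
  have hco : Nat.Coprime (2 ^ n.factorization 2) (ordCompl[2] n) :=
    Nat.Coprime.pow_left _ (Nat.coprime_ordCompl Nat.prime_two hn)
  have hodd : ¬ 2 ∣ ordCompl[2] n := Nat.not_dvd_ordCompl Nat.prime_two hn
  have h1 : ordCompl[2] n ≤ Nat.totient (ordCompl[2] n) ^ 2 := wag_odd_le_totient_sq _ hodd
  have h2 : 2 ^ n.factorization 2 ≤ 2 * Nat.totient (2 ^ n.factorization 2) ^ 2 := by
    rcases Nat.eq_zero_or_pos (n.factorization 2) with h | h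
    · simp [h]
    · rw [Nat.totient_prime_pow Nat.prime_two h]
      have : 2 ^ n.factorization 2 ≤ 2 * (2 ^ (n.factorization 2 - 1))^2 := by
        rw [← pow_mul, ← pow_succ']
        exact Nat.pow_le_pow_right (by norm_num) (by omega)
      simpa using this
  calc n = 2 ^ n.factorization 2 * ordCompl[2] n := (Nat.ordProj_mul_ordCompl_eq_self n 2).symm
    _ ≤ (2 * Nat.totient (2 ^ n.factorization 2) ^ 2) * (Nat.totient (ordCompl[2] n) ^ 2) :=
        Nat.mul_le_mul h2 h1
    _ = 2 * (Nat.totient (2 ^ n.factorization 2) * Nat.totient (ordCompl[2] n)) ^ 2 := by ring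
    _ = 2 * Nat.totient n ^ 2 := by rw [← Nat.totient_mul hco, Nat.ordProj_mul_ordCompl_eq_self]

private theorem wag_summable_inv_mul_totient :
    Summable (fun n : ℕ => ((n : ℝ) * (Nat.totient n : ℝ))⁻¹) := by
  have hmaj : Summable (fun n : ℕ => Real.sqrt 2 * ((n : ℝ) ^ (3/2 : ℝ))⁻¹) :=
    (Real.summable_nat_rpow_inv.mpr (by norm_num)).mul_left _
  refine Summable.of_nonneg_of_le (fun n => by positivity) (fun n => ?_) hmaj
  rcases Nat.eq_zero_or_pos n with rfl | hn
  · simp [Real.zero_rpow (by norm_num : (3/2:ℝ) ≠ 0)]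
  have hφ : 0 < (Nat.totient n : ℝ) := by exact_mod_cast Nat.totient_pos.mpr hn
  have hn' : (0:ℝ) < n := by exact_mod_cast hn
  have h32 : (n:ℝ) ^ (3/2:ℝ) = n * Real.sqrt n := by
    rw [show (3/2:ℝ) = 1 + 1/2 by norm_num, Real.rpow_add hn', Real.rpow_one, Real.sqrt_eq_rpow]
  have hsq : Real.sqrt n ≤ Real.sqrt 2 * Nat.totient n := by
    have h1 : (n:ℝ) ≤ 2 * (Nat.totient n : ℝ)^2 := by exact_mod_cast wag_le_two_mul_totient_sq n
    calc Real.sqrt n ≤ Real.sqrt (2 * (Nat.totient n : ℝ)^2) := Real.sqrt_le_sqrt h1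
      _ = Real.sqrt 2 * Nat.totient n := by
          rw [Real.sqrt_mul (by norm_num), Real.sqrt_sq hφ.le]
  have key : (n:ℝ) ^ (3/2:ℝ) ≤ Real.sqrt 2 * ((n:ℝ) * Nat.totient n) := by
    rw [h32]
    calc (n:ℝ) * Real.sqrt n ≤ (n:ℝ) * (Real.sqrt 2 * Nat.totient n) :=
          mul_le_mul_of_nonneg_left hsq hn'.le
      _ = Real.sqrt 2 * ((n:ℝ) * Nat.totient n) := by ring
  rw [← one_div, ← one_div, mul_one_div, div_le_div_iff₀ (by positivity) (by positivity)]
  linarith [key]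

/-- The summand of the Wagstaff sum. -/
noncomputable def wterm (h t n : ℕ) : ℝ :=
  (ArithmeticFunction.moebius n : ℝ) * (Nat.gcd (n * t) h : ℝ) /
    (↑(n * t) * ↑(Nat.totient (n * t)))

private theorem abs_wterm_le (h t : ℕ) (hh : 0 < h) (ht : 0 < t) (n : ℕ) :
    |wterm h t n| ≤ (h : ℝ) * ((n : ℝ) * (Nat.totient n : ℝ))⁻¹ := by
  rcases Nat.eq_zero_or_pos n with rfl | hn
  · simp [wterm]
  have hmu : |(ArithmeticFunction.moebius n : ℝ)| ≤ 1 := by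
    rcases eq_or_ne (ArithmeticFunction.moebius n) 0 with h | h
    · simp [h]
    · rcases ArithmeticFunction.moebius_ne_zero_iff_eq_or.mp h with h' | h' <;> simp [h']
  have hnt : 0 < n * t := Nat.mul_pos hn ht
  have hd : (0:ℝ) < (n*t : ℕ) * (Nat.totient (n*t) : ℕ) := by
    have := Nat.totient_pos.mpr hnt
    positivity
  have hd2 : (0:ℝ) < (n : ℝ) * (Nat.totient n : ℝ) := by
    have := Nat.totient_pos.mpr hn
    positivity
  have hgcd : (Nat.gcd (n*t) h : ℝ) ≤ h := by exact_mod_cast Nat.le_of_dvd hh (Nat.gcd_dvd_right _ _)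
  have hden : (n : ℝ) * (Nat.totient n : ℝ) ≤ ((n*t : ℕ) : ℝ) * (Nat.totient (n*t) : ℕ) := by
    have h1 : n ≤ n * t := Nat.le_mul_of_pos_right n ht
    have h2 : Nat.totient n ≤ Nat.totient (n*t) := by
      calc Nat.totient n ≤ Nat.totient n * Nat.totient t :=
            Nat.le_mul_of_pos_right _ (Nat.totient_pos.mpr ht)
        _ ≤ Nat.totient (n*t) := Nat.totient_super_multiplicative n t
    exact_mod_cast Nat.mul_le_mul h1 h2
  rw [wterm, abs_div, abs_mul]
  rw [abs_of_pos hd]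
  calc |(ArithmeticFunction.moebius n : ℝ)| * |(Nat.gcd (n*t) h : ℝ)| / ((n*t : ℕ) * (Nat.totient (n*t) : ℕ))
      ≤ 1 * (h : ℝ) / ((n*t : ℕ) * (Nat.totient (n*t) : ℕ)) := by
        gcongr
        · rw [abs_of_nonneg (by positivity)]; exact hgcd
    _ ≤ (h : ℝ) / ((n:ℝ) * (Nat.totient n : ℝ)) := by
        rw [one_mul]
        exact div_le_div_of_nonneg_left (by positivity) hd2 hden
    _ = (h : ℝ) * ((n : ℝ) * (Nat.totient n : ℝ))⁻¹ := by rw [div_eq_mul_inv]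

private theorem wterm_two_mul_even (h t k : ℕ) (hk : 2 ∣ k) : wterm h t (2 * k) = 0 := by
  have : ArithmeticFunction.moebius (2 * k) = 0 := by
    apply ArithmeticFunction.moebius_eq_zero_of_not_squarefree
    exact fun hs => Nat.prime_two.not_isUnit (hs 2 (mul_dvd_mul_left 2 hk))
  simp [wterm, this]

private theorem wagstaff_ratio (h t : ℕ) (hh : 0 < h) (ht : 0 < t) (c : ℝ)
    (hc1 : c ≠ 1)
    (hkey : ∀ k : ℕ, 0 < k → ¬ 2 ∣ k → wterm h t (2 * k) = -c * wterm h t k) :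
    wagstaffS h t (2 * ordProj[2] t) = -(c / (1 - c)) * wagstaffS h t 1 := by
  set F : ℕ → ℝ := fun k => if 0 < k ∧ ¬ 2 ∣ k then wterm h t k else 0 with hF
  set G : ℕ → ℝ := fun n => if 0 < n ∧ 2 ∣ n then wterm h t n else 0 with hG
  have hinj : Function.Injective (fun k : ℕ => 2 * k) := by
    intro a b hab
    have : 2 * a = 2 * b := hab
    omega
  have hvan : ∀ n ∉ Set.range (fun k : ℕ => 2 * k), G n = 0 := by
    intro n hn
    have h2 : ¬ (0 < n ∧ 2 ∣ n) := by
      rintro ⟨-, m, hm⟩; exact hn ⟨m, hm.symm⟩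
    simp only [hG]
    exact if_neg h2
  have hG2 : ∀ k : ℕ, G (2 * k) = -c * F k := by
    intro k
    rcases Nat.eq_zero_or_pos k with rfl | hk
    · simp only [hG, hF, mul_zero]
      rw [if_neg (by omega), if_neg (by omega), mul_zero]
    by_cases h2 : 2 ∣ k
    · simp only [hG, hF]
      rw [if_pos (show 0 < 2 * k ∧ 2 ∣ 2 * k from ⟨by omega, ⟨k, rfl⟩⟩),
        if_neg (show ¬ (0 < k ∧ ¬ 2 ∣ k) by tauto), wterm_two_mul_even h t k h2, mul_zero]
    · simp only [hG, hF]
      rw [if_pos (show 0 < 2 * k ∧ 2 ∣ 2 * k from ⟨by omega, ⟨k, rfl⟩⟩),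
        if_pos (show 0 < k ∧ ¬ 2 ∣ k from ⟨hk, h2⟩)]
      exact hkey k hk h2
  have hSF : Summable F := by
    apply Summable.of_abs
    apply Summable.of_nonneg_of_le (fun n => abs_nonneg _)
      (fun n => ?_) ((wag_summable_inv_mul_totient).mul_left (h : ℝ))
    simp only [hF]
    rcases Classical.em (0 < n ∧ ¬ 2 ∣ n) with hc | hc
    · rw [if_pos hc]; exact abs_wterm_le h t hh ht n
    · rw [if_neg hc, abs_zero]; positivity
  have hcomp : (G ∘ fun k : ℕ => 2 * k) = fun k => -c * F k := funext hG2
  have hSG : Summable G := by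
    rw [← Function.Injective.summable_iff hinj hvan, hcomp]
    exact hSF.mul_left _
  have hT2 : (∑' n, G n) = -c * ∑' k, F k := by
    rw [← Function.Injective.tsum_eq hinj (f := G) ?_]
    · rw [show (fun k : ℕ => G ((fun k : ℕ => 2 * k) k)) = fun k => -c * F k from funext hG2]
      exact tsum_mul_left
    · intro n hn
      by_contra hr
      exact hn (hvan n hr)
  have hdvd : ∀ n : ℕ, 0 < n → (2 * ordProj[2] t ∣ n * t ↔ 2 ∣ n) := by
    intro n hn
    have hnt : n * t ≠ 0 := by positivity
    rw [show 2 * ordProj[2] t = 2 ^ (t.factorization 2 + 1) by rw [pow_succ]; ring]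
    rw [Nat.Prime.pow_dvd_iff_le_factorization Nat.prime_two hnt,
      Nat.factorization_mul (by omega) (by omega)]
    simp only [Finsupp.coe_add, Pi.add_apply]
    rw [Nat.Prime.dvd_iff_one_le_factorization Nat.prime_two (by omega)]
    omega
  have hS2 : wagstaffS h t (2 * ordProj[2] t) = ∑' n, G n := by
    rw [wagstaffS]
    apply tsum_congr
    intro n
    simp only [hG]
    rcases Nat.eq_zero_or_pos n with rfl | hn
    · rw [if_neg (by omega), if_neg (by omega)]
    by_cases h2 : 2 ∣ n
    · rw [if_pos ⟨hn, (hdvd n hn).mpr h2⟩, if_pos ⟨hn, h2⟩]; rfl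
    · rw [if_neg (fun hx => h2 ((hdvd n hn).mp hx.2)), if_neg (by tauto)]
  have hS1 : wagstaffS h t 1 = (∑' k, F k) + ∑' n, G n := by
    rw [← Summable.tsum_add hSF hSG, wagstaffS]
    apply tsum_congr
    intro n
    simp only [hF, hG]
    rcases Nat.eq_zero_or_pos n with rfl | hn
    · rw [if_neg (by omega), if_neg (by omega), if_neg (by omega), add_zero]
    by_cases h2 : 2 ∣ n
    · rw [if_pos ⟨hn, one_dvd _⟩, if_neg (by tauto), if_pos ⟨hn, h2⟩, zero_add]; rfl
    · rw [if_pos ⟨hn, one_dvd _⟩, if_pos ⟨hn, h2⟩, if_neg (by tauto), add_zero]; rfl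
  have hne : (1 : ℝ) - c ≠ 0 := by
    intro hx; apply hc1; linarith
  rw [hS2, hT2, hS1, hT2]
  field_simp
  ring

private theorem wag_gcd_two_mul_of_le (m h : ℕ) (hm : 0 < m) (hh : 0 < h)
    (hle : h.factorization 2 ≤ m.factorization 2) :
    Nat.gcd (2 * m) h = Nat.gcd m h := by
  have h2m : 2 * m ≠ 0 := by omega
  apply Nat.eq_of_factorization_eq (Nat.gcd_ne_zero_right (by omega)) (Nat.gcd_ne_zero_right (by omega))
  intro p
  rw [Nat.factorization_gcd h2m (by omega), Nat.factorization_gcd (by omega) (by omega),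
    Nat.factorization_mul (by omega) (by omega)]
  simp only [Finsupp.inf_apply, Finsupp.coe_add, Pi.add_apply]
  by_cases hp : p = 2
  · subst hp
    rw [Nat.Prime.factorization Nat.prime_two]
    simp only [Finsupp.single_eq_same]
    omega
  · rw [Nat.Prime.factorization Nat.prime_two, Finsupp.single_eq_of_ne' (Ne.symm hp)]
    omega

private theorem wag_gcd_two_mul_of_lt (m h : ℕ) (hm : 0 < m) (hh : 0 < h)
    (hlt : m.factorization 2 < h.factorization 2) :
    Nat.gcd (2 * m) h = 2 * Nat.gcd m h := by
  have hg : Nat.gcd m h ≠ 0 := Nat.gcd_ne_zero_right (by omega)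
  apply Nat.eq_of_factorization_eq (Nat.gcd_ne_zero_right (by omega)) (by positivity)
  intro p
  rw [Nat.factorization_gcd (by omega) (by omega),
    Nat.factorization_mul (by omega) hg,
    Nat.factorization_mul (by omega) (by omega),
    Nat.factorization_gcd (by omega) (by omega)]
  simp only [Finsupp.inf_apply, Finsupp.coe_add, Pi.add_apply]
  by_cases hp : p = 2
  · subst hp
    rw [Nat.Prime.factorization Nat.prime_two]
    simp only [Finsupp.single_eq_same]
    omega
  · rw [Nat.Prime.factorization Nat.prime_two, Finsupp.single_eq_of_ne' (Ne.symm hp)]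
    omega

private theorem wag_moebius_two_mul_odd (k : ℕ) (hk : ¬ 2 ∣ k) :
    (ArithmeticFunction.moebius (2 * k) : ℤ) = - ArithmeticFunction.moebius k := by
  rw [ArithmeticFunction.isMultiplicative_moebius.map_mul_of_coprime
    (Nat.coprime_two_left.mpr (Nat.odd_iff.mpr (Nat.two_dvd_ne_zero.mp hk)))]
  rw [ArithmeticFunction.moebius_apply_prime Nat.prime_two]
  ring

private theorem wterm_two_mul (h t k : ℕ) (ht : 0 < t) (hk : 0 < k) (hk2 : ¬ 2 ∣ k) (a b : ℕ)
    (hb : 0 < b)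
    (hg : Nat.gcd (2 * (k * t)) h = a * Nat.gcd (k * t) h)
    (hφ : Nat.totient (2 * (k * t)) = b * Nat.totient (k * t)) :
    wterm h t (2 * k) = -((a : ℝ) / (2 * b)) * wterm h t k := by
  have hkt : 0 < k * t := Nat.mul_pos hk ht
  have hφkt : 0 < Nat.totient (k * t) := Nat.totient_pos.mpr hkt
  rw [wterm, wterm, show 2 * k * t = 2 * (k * t) by ring, hg, hφ]
  have hmu : ((ArithmeticFunction.moebius (2 * k) : ℤ) : ℝ)
      = -((ArithmeticFunction.moebius k : ℤ) : ℝ) := by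
    rw [wag_moebius_two_mul_odd k hk2]; push_cast; ring
  rw [hmu]
  have h1 : ((k * t : ℕ) : ℝ) ≠ 0 := by positivity
  have h2 : ((Nat.totient (k * t) : ℕ) : ℝ) ≠ 0 := by positivity
  have h3 : ((b : ℕ) : ℝ) ≠ 0 := by positivity
  push_cast
  field_simp

end WagstaffAux

/-- If it is not the case that `h` is even and `t` is odd, then `S(h,t,2t₂) = -S(h,t,1)/3`
when `lcm(2,h₂) ∣ t₂`, and `S(h,t,2t₂) = -S(h,t,1)` when `lcm(2,h₂) ∤ t₂`. -/

theorem wagstaff_two_t2 (h t : ℕ) (hh : 0 < h) (ht : 0 < t)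
    (hcond : ¬ (2 ∣ h ∧ ¬ 2 ∣ t)) :
    (Nat.lcm 2 (ordProj[2] h) ∣ ordProj[2] t →
        wagstaffS h t (2 * ordProj[2] t) = -wagstaffS h t 1 / 3) ∧
    (¬ Nat.lcm 2 (ordProj[2] h) ∣ ordProj[2] t →
        wagstaffS h t (2 * ordProj[2] t) = -wagstaffS h t 1) := by
  have hiff : Nat.lcm 2 (ordProj[2] h) ∣ ordProj[2] t ↔
      (1 ≤ t.factorization 2 ∧ h.factorization 2 ≤ t.factorization 2) := by
    constructor
    · intro hd
      constructor
      · have h1 := (Nat.dvd_lcm_left 2 (ordProj[2] h)).trans hd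
        rw [show (2:ℕ) = 2 ^ 1 from (pow_one 2).symm] at h1
        exact (Nat.pow_dvd_pow_iff_le_right one_lt_two).mp h1
      · have h1 := (Nat.dvd_lcm_right 2 (ordProj[2] h)).trans hd
        exact (Nat.pow_dvd_pow_iff_le_right one_lt_two).mp h1
    · rintro ⟨h1, h2⟩
      refine Nat.lcm_dvd ?_ (pow_dvd_pow 2 h2)
      calc (2:ℕ) = 2 ^ 1 := (pow_one 2).symm
        _ ∣ 2 ^ t.factorization 2 := pow_dvd_pow 2 h1
  have hktfact : ∀ k : ℕ, 0 < k → ¬ 2 ∣ k → (k * t).factorization 2 = t.factorization 2 := by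
    intro k hk hk2
    rw [Nat.factorization_mul (by omega) (by omega)]
    simp only [Finsupp.coe_add, Pi.add_apply]
    rw [Nat.factorization_eq_zero_of_not_dvd hk2, zero_add]
  constructor
  · -- lcm(2,h₂) ∣ t₂
    intro hA
    obtain ⟨h1, h2⟩ := hiff.mp hA
    have h2t : 2 ∣ t := (Nat.Prime.dvd_iff_one_le_factorization Nat.prime_two ht.ne').mpr h1
    have hrat := wagstaff_ratio h t hh ht (1/4) (by norm_num) ?_
    · rw [hrat]; norm_num; ring
    intro k hk hk2
    have hkt : 0 < k * t := Nat.mul_pos hk ht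
    have hgcd : Nat.gcd (2 * (k * t)) h = 1 * Nat.gcd (k * t) h := by
      rw [one_mul]
      exact wag_gcd_two_mul_of_le (k * t) h hkt hh (by rw [hktfact k hk hk2]; exact h2)
    have hphi : Nat.totient (2 * (k * t)) = 2 * Nat.totient (k * t) :=
      Nat.totient_mul_of_prime_of_dvd Nat.prime_two (h2t.mul_left k)
    have := wterm_two_mul h t k ht hk hk2 1 2 (by norm_num) hgcd hphi
    rw [this]; norm_num
  · -- ¬ lcm(2,h₂) ∣ t₂
    intro hB
    rw [hiff] at hB
    have hrat := wagstaff_ratio h t hh ht (1/2) (by norm_num) ?_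
    · rw [hrat]; norm_num
    intro k hk hk2
    have hkt : 0 < k * t := Nat.mul_pos hk ht
    by_cases hhe : 2 ∣ h
    · -- h even, hence t even and v₂(t) < v₂(h)
      have h2t : 2 ∣ t := by tauto
      have h1 : 1 ≤ t.factorization 2 :=
        (Nat.Prime.dvd_iff_one_le_factorization Nat.prime_two ht.ne').mp h2t
      have hlt : t.factorization 2 < h.factorization 2 := by
        rcases Nat.lt_or_ge (t.factorization 2) (h.factorization 2) with h' | h'
        · exact h'
        · exact absurd ⟨h1, h'⟩ hB
      have hgcd : Nat.gcd (2 * (k * t)) h = 2 * Nat.gcd (k * t) h :=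
        wag_gcd_two_mul_of_lt (k * t) h hkt hh (by rw [hktfact k hk hk2]; exact hlt)
      have hphi : Nat.totient (2 * (k * t)) = 2 * Nat.totient (k * t) :=
        Nat.totient_mul_of_prime_of_dvd Nat.prime_two (h2t.mul_left k)
      have := wterm_two_mul h t k ht hk hk2 2 2 (by norm_num) hgcd hphi
      rw [this]; norm_num
    · -- h odd, hence t odd
      have hvh : h.factorization 2 = 0 := Nat.factorization_eq_zero_of_not_dvd hhe
      have h2t : ¬ 2 ∣ t := by
        intro h2t
        exact hB ⟨(Nat.Prime.dvd_iff_one_le_factorization Nat.prime_two ht.ne').mp h2t,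
          by omega⟩
      have hktodd : ¬ 2 ∣ k * t := by
        intro hd
        rcases (Nat.prime_two.dvd_mul).mp hd with h' | h'
        · exact hk2 h'
        · exact h2t h'
      have hgcd : Nat.gcd (2 * (k * t)) h = 1 * Nat.gcd (k * t) h := by
        rw [one_mul]
        exact wag_gcd_two_mul_of_le (k * t) h hkt hh (by omega)
      have hphi : Nat.totient (2 * (k * t)) = 1 * Nat.totient (k * t) := by
        rw [one_mul, Nat.totient_mul (Nat.coprime_two_left.mpr (Nat.odd_iff.mpr
          (Nat.two_dvd_ne_zero.mp hktodd))), Nat.totient_two, one_mul]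
      have := wterm_two_mul h t k ht hk hk2 1 1 (by norm_num) hgcd hphi
      rw [this]; norm_num
end
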